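/- arXiv:2206.06678 — 7 statements merged into one kernel-verified Lean document; each statement's English description precedes it below -/
import Mathlib

section
/- For every n and all monotone maps f, g : Fin n → Fin n, there exist monotone maps c, d : Fin n → Fin n with g = c ∘ f ∘ d if and only if the cardinality of the image of g is at most the cardinality of the image of f. Hence the two-sided (J-)cells of the planar transformation monoid PT_n (n ≥ 1) are exactly the sets of monotone maps of a fixed rank λ ∈ {1, …, n}, totally ordered with the two-sided order increasing as the rank decreases. -/
/-- In the planar transformation monoid `PT_n` of all monotone
maps `Fin n → Fin n`, one has `g = c ∘ f ∘ d` for some monotone maps `c, d` if and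
only if the rank of `g` (the cardinality of its image) is at most the rank of `f`.
Hence the two-sided (J-)cells of `PT_n` are the sets of monotone maps of a fixed
rank, totally ordered with the cell order increasing as the rank decreases. -/
theorem planarTransformationMonoid_J_order_iff_rank_le
    (n : ℕ) (f g : Fin n → Fin n) (hf : Monotone f) (hg : Monotone g) :
    (∃ c d : Fin n → Fin n, Monotone c ∧ Monotone d ∧ g = c ∘ f ∘ d) ↔
      (Finset.univ.image g).card ≤ (Finset.univ.image f).card := by
  constructor
  · rintro ⟨c, d, hc, hd, rfl⟩
    calc (Finset.univ.image (c ∘ f ∘ d)).card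
        = ((Finset.univ.image (f ∘ d)).image c).card := by
          rw [Finset.image_image]
      _ ≤ (Finset.univ.image (f ∘ d)).card := Finset.card_image_le
      _ = ((Finset.univ.image d).image f).card := by rw [Finset.image_image]
      _ ≤ (Finset.univ.image f).card :=
          Finset.card_le_card (Finset.image_subset_image (Finset.subset_univ _))
  · intro hle
    rcases Nat.eq_zero_or_pos n with hn | hn
    · subst hn
      exact ⟨id, id, monotone_id, monotone_id, funext fun x => x.elim0⟩
    set S := Finset.univ.image g with hS
    set T := Finset.univ.image f with hT
    have rpos : 0 < S.card := Finset.card_pos.2 ⟨g ⟨0, hn⟩, by simp [hS]⟩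
    set b : Fin S.card ↪o Fin n := S.orderEmbOfFin rfl with hb
    set a : Fin T.card ↪o Fin n := T.orderEmbOfFin rfl with ha
    -- index of g x in S
    have hgx : ∀ x, g x ∈ S := fun x => by simp [hS]
    set k : Fin n → Fin S.card := fun x => (S.orderIsoOfFin rfl).symm ⟨g x, hgx x⟩ with hk
    have hbk : ∀ x, b (k x) = g x := by
      intro x
      have := (S.orderIsoOfFin rfl).apply_symm_apply ⟨g x, hgx x⟩
      have h2 : ((S.orderIsoOfFin rfl) (k x) : Fin n) = b (k x) :=
        S.coe_orderIsoOfFin_apply rfl (k x)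
      rw [this] at h2
      exact h2.symm
    have hkmono : Monotone k := by
      intro x y hxy
      exact ((S.orderIsoOfFin rfl).symm.le_iff_le).2 (by exact hg hxy)
    -- minimal preimage
    have hPne : ∀ j : Fin T.card, (Finset.univ.filter (fun x => f x = a j)).Nonempty := by
      intro j
      have : (a j : Fin n) ∈ T := T.orderEmbOfFin_mem rfl j
      obtain ⟨x, -, hx⟩ := Finset.mem_image.1 this
      exact ⟨x, by simp [hx]⟩
    set p : Fin T.card → Fin n := fun j => (Finset.univ.filter (fun x => f x = a j)).min' (hPne j) with hp
    have hfp : ∀ j, f (p j) = a j := by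
      intro j
      have := (Finset.univ.filter (fun x => f x = a j)).min'_mem (hPne j)
      simpa using this
    have hpmono : Monotone p := by
      intro j j' hjj'
      by_contra hlt
      push_neg at hlt
      have h1 : f (p j') ≤ f (p j) := hf (le_of_lt hlt)
      rw [hfp, hfp] at h1
      have h2 : a j ≤ a j' := a.monotone hjj'
      have : a j = a j' := le_antisymm h2 h1
      have : j = j' := a.injective this
      subst this
      exact absurd rfl (ne_of_lt hlt)
    set d : Fin n → Fin n := fun x => p (Fin.castLE hle (k x)) with hd
    have hdmono : Monotone d := fun x y hxy =>
      hpmono ((Fin.strictMono_castLE hle).monotone (hkmono hxy))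
    -- c
    set m : Fin n → ℕ := fun y =>
      (Finset.univ.filter (fun j : Fin S.card => a (Fin.castLE hle j) ≤ y)).card with hm
    have hmle : ∀ y, m y ≤ S.card := fun y =>
      le_trans (Finset.card_filter_le _ _) (by simp)
    have hmlt : ∀ y, m y - 1 < S.card := fun y => by
      have := hmle y; omega
    set c : Fin n → Fin n := fun y => b ⟨m y - 1, hmlt y⟩ with hc
    have hmmono : Monotone m := by
      intro y y' hyy'
      exact Finset.card_le_card (Finset.monotone_filter_right _ (fun j _ hj => le_trans hj hyy'))
    have hcmono : Monotone c := by
      intro y y' hyy'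
      have := hmmono hyy'
      exact b.monotone (by simp only [Fin.mk_le_mk]; omega)
    refine ⟨c, d, hcmono, hdmono, funext fun x => ?_⟩
    have hstrict : StrictMono (fun j : Fin S.card => a (Fin.castLE hle j)) :=
      a.strictMono.comp (Fin.strictMono_castLE hle)
    have hfd : f (d x) = a (Fin.castLE hle (k x)) := hfp _
    have hmval : m (f (d x)) = (k x : ℕ) + 1 := by
      have heq : (Finset.univ.filter (fun j : Fin S.card =>
          a (Fin.castLE hle j) ≤ a (Fin.castLE hle (k x)))) = Finset.Iic (k x) := by
        ext j
        simpa using hstrict.le_iff_le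
      simp only [hm, hfd, heq, Fin.card_Iic]
    simp only [Function.comp_apply, hc]
    have : (⟨m (f (d x)) - 1, hmlt _⟩ : Fin S.card) = k x := by
      ext
      simp [hmval]
    rw [this, hbk]
end

section
/- Let K be a field of characteristic 0, let n ≥ 2 and 2 ≤ λ ≤ n. Let G be the matrix over K whose rows are indexed by the partitions of Fin n into exactly λ nonempty blocks, whose columns are indexed by the λ-element subsets of Fin n, and whose (P, S)-entry is 1 if S meets every block of P in exactly one element and 0 otherwise. Then the rank of G equals the binomial coefficient C(n, λ); that is, G has full column rank. -/
open Finset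

namespace GramAux

variable {n : ℕ}

def gramParts (A C D : Finset (Fin n)) : Finset (Finset (Fin n)) :=
  A.image (fun a => ({a} : Finset (Fin n))) ∪ {C, D}

lemma mem_gramParts {A C D p : Finset (Fin n)} :
    p ∈ gramParts A C D ↔ (∃ a ∈ A, ({a} : Finset (Fin n)) = p) ∨ p = C ∨ p = D := by
  rw [gramParts, mem_union, mem_image, mem_insert, mem_singleton]

def gramFinpartition (A C D : Finset (Fin n)) (hC : C.Nonempty) (hD : D.Nonempty)
    (hCD : Disjoint C D) (hAC : Disjoint A C) (hAD : Disjoint A D)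
    (hu : A ∪ C ∪ D = univ) : Finpartition (univ : Finset (Fin n)) where
  parts := gramParts A C D
  supIndep := by
    rw [Finset.supIndep_iff_pairwiseDisjoint]
    intro p hp q hq hpq
    rw [mem_coe, mem_gramParts] at hp hq
    obtain (⟨a, ha, rfl⟩ | rfl | rfl) := hp <;>
      obtain (⟨b, hb, rfl⟩ | rfl | rfl) := hq
    · exact Finset.disjoint_singleton.mpr (by rintro rfl; exact hpq rfl)
    · exact Finset.disjoint_singleton_left.mpr (Finset.disjoint_left.mp hAC ha)
    · exact Finset.disjoint_singleton_left.mpr (Finset.disjoint_left.mp hAD ha)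
    · exact Finset.disjoint_singleton_right.mpr (Finset.disjoint_left.mp hAC hb)
    · exact absurd rfl hpq
    · exact hCD
    · exact Finset.disjoint_singleton_right.mpr (Finset.disjoint_left.mp hAD hb)
    · exact hCD.symm
    · exact absurd rfl hpq
  sup_parts := by
    apply Finset.Subset.antisymm (fun x hx => mem_univ x)
    intro x _
    have hx : x ∈ A ∪ C ∪ D := by rw [hu]; exact mem_univ x
    rw [Finset.mem_sup]
    rcases mem_union.mp hx with hx' | hx'
    · rcases mem_union.mp hx' with hA | hC'
      · exact ⟨{x}, mem_gramParts.mpr (Or.inl ⟨x, hA, rfl⟩), mem_singleton_self x⟩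
      · exact ⟨C, mem_gramParts.mpr (Or.inr (Or.inl rfl)), hC'⟩
    · exact ⟨D, mem_gramParts.mpr (Or.inr (Or.inr rfl)), hx'⟩
  bot_notMem := by
    rw [mem_gramParts]
    rintro (⟨a, _, ha⟩ | rfl | rfl)
    · exact Finset.singleton_ne_empty a ha
    · exact hC.ne_empty rfl
    · exact hD.ne_empty rfl

lemma card_gramParts (A C D : Finset (Fin n)) (hC : C.Nonempty) (hD : D.Nonempty)
    (hCD : Disjoint C D) (hAC : Disjoint A C) (hAD : Disjoint A D) :
    (gramParts A C D).card = A.card + 2 := by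
  have hCne : ∀ a ∈ A, ({a} : Finset (Fin n)) ≠ C := by
    rintro a ha rfl
    exact Finset.disjoint_left.mp hAC ha (mem_singleton_self a)
  have hDne : ∀ a ∈ A, ({a} : Finset (Fin n)) ≠ D := by
    rintro a ha rfl
    exact Finset.disjoint_left.mp hAD ha (mem_singleton_self a)
  have hCD' : C ≠ D := by
    rintro rfl
    exact hC.ne_empty (disjoint_self.mp hCD)
  rw [gramParts, Finset.card_union_of_disjoint, Finset.card_image_of_injective _
    Finset.singleton_injective, Finset.card_pair hCD']
  · rw [Finset.disjoint_left]
    rintro p hp hp2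
    obtain ⟨a, ha, rfl⟩ := Finset.mem_image.mp hp
    rcases Finset.mem_insert.mp hp2 with h | h
    · exact hCne a ha h
    · exact hDne a ha (Finset.mem_singleton.mp h)


lemma card_union_pair {A : Finset (Fin n)} {c d : Fin n} (hc : c ∉ A) (hd : d ∉ A)
    (hcd : c ≠ d) : (A ∪ {c, d}).card = A.card + 2 := by
  rw [Finset.card_union_of_disjoint, Finset.card_pair hcd]
  rw [Finset.disjoint_right]
  intro x hx
  rcases Finset.mem_insert.mp hx with rfl | hx'
  · exact hc
  · rw [Finset.mem_singleton.mp hx']; exact hd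

lemma transversal_iff {lam : ℕ} (A C D : Finset (Fin n))
    (hCD : Disjoint C D) (hAC : Disjoint A C) (hAD : Disjoint A D)
    (hA : A.card = lam - 2) (hlam : 2 ≤ lam) {S : Finset (Fin n)} :
    (S.card = lam ∧ ∀ p ∈ gramParts A C D, (S ∩ p).card = 1) ↔
      ∃ c ∈ C, ∃ d ∈ D, S = A ∪ {c, d} := by
  have hA2 : A.card + 2 = lam := by omega
  constructor
  · rintro ⟨hcard, htr⟩
    obtain ⟨c, hc⟩ := Finset.card_eq_one.mp
      (htr C (mem_gramParts.mpr (Or.inr (Or.inl rfl))))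
    obtain ⟨d, hd⟩ := Finset.card_eq_one.mp
      (htr D (mem_gramParts.mpr (Or.inr (Or.inr rfl))))
    have hcC : c ∈ C := (Finset.mem_inter.mp (hc ▸ mem_singleton_self c)).2
    have hcS : c ∈ S := (Finset.mem_inter.mp (hc ▸ mem_singleton_self c)).1
    have hdD : d ∈ D := (Finset.mem_inter.mp (hd ▸ mem_singleton_self d)).2
    have hdS : d ∈ S := (Finset.mem_inter.mp (hd ▸ mem_singleton_self d)).1
    have hAS : A ⊆ S := by
      intro a ha
      have h1 := htr {a} (mem_gramParts.mpr (Or.inl ⟨a, ha, rfl⟩))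
      obtain ⟨b, hb⟩ := Finset.card_eq_one.mp h1
      have : b ∈ S ∩ {a} := hb ▸ mem_singleton_self b
      rw [Finset.mem_inter, Finset.mem_singleton] at this
      obtain ⟨h2, rfl⟩ := this
      exact h2
    refine ⟨c, hcC, d, hdD, ?_⟩
    have hsub : A ∪ {c, d} ⊆ S := by
      apply Finset.union_subset hAS
      intro x hx
      rcases Finset.mem_insert.mp hx with rfl | hx'
      · exact hcS
      · rw [Finset.mem_singleton.mp hx']; exact hdS
    have hcd : c ≠ d := by
      rintro rfl
      exact Finset.disjoint_left.mp hCD hcC hdD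
    have hcardu : (A ∪ {c, d}).card = lam := by
      rw [card_union_pair (Finset.disjoint_right.mp hAC hcC)
        (Finset.disjoint_right.mp hAD hdD) hcd, hA2]
    exact (Finset.eq_of_subset_of_card_le hsub (by rw [hcardu, hcard])).symm
  · rintro ⟨c, hcC, d, hdD, rfl⟩
    have hcd : c ≠ d := by
      rintro rfl
      exact Finset.disjoint_left.mp hCD hcC hdD
    have hcA : c ∉ A := Finset.disjoint_right.mp hAC hcC
    have hdA : d ∉ A := Finset.disjoint_right.mp hAD hdD
    refine ⟨by rw [card_union_pair hcA hdA hcd, hA2], ?_⟩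
    intro p hp
    rcases mem_gramParts.mp hp with ⟨a, ha, rfl⟩ | h | h
    · rw [Finset.inter_singleton_of_mem (Finset.mem_union_left _ ha),
        Finset.card_singleton]
    · rw [h]
      have : (A ∪ {c, d}) ∩ C = {c} := by
        ext x
        simp only [Finset.mem_inter, Finset.mem_union, Finset.mem_insert,
          Finset.mem_singleton]
        constructor
        · rintro ⟨hx1 | (rfl | rfl), hx2⟩
          · exact absurd hx2 (Finset.disjoint_left.mp hAC hx1)
          · rfl
          · exact absurd hx2 (Finset.disjoint_right.mp hCD hdD)
        · rintro rfl
          exact ⟨Or.inr (Or.inl rfl), hcC⟩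
      rw [this, Finset.card_singleton]
    · rw [h]
      have : (A ∪ {c, d}) ∩ D = {d} := by
        ext x
        simp only [Finset.mem_inter, Finset.mem_union, Finset.mem_insert,
          Finset.mem_singleton]
        constructor
        · rintro ⟨hx1 | (rfl | rfl), hx2⟩
          · exact absurd hx2 (Finset.disjoint_left.mp hAD hx1)
          · exact absurd hx2 (Finset.disjoint_left.mp hCD hcC)
          · rfl
        · rintro rfl
          exact ⟨Or.inr (Or.inr rfl), hdD⟩
      rw [this, Finset.card_singleton]


lemma gramFinpartition_parts (A C D : Finset (Fin n)) (hC : C.Nonempty) (hD : D.Nonempty)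
    (hCD : Disjoint C D) (hAC : Disjoint A C) (hAD : Disjoint A D)
    (hu : A ∪ C ∪ D = univ) :
    (gramFinpartition A C D hC hD hCD hAC hAD hu).parts = gramParts A C D := rfl

lemma rel_sum {K : Type*} [Field K] {lam : ℕ} (hlam : 2 ≤ lam) (hln : lam ≤ n)
    (y : Finset (Fin n) → K)
    (A C D : Finset (Fin n)) (hA : A.card = lam - 2)
    (hC : C.Nonempty) (hD : D.Nonempty) (hCD : Disjoint C D)
    (hAC : Disjoint A C) (hAD : Disjoint A D) (hu : A ∪ C ∪ D = univ)
    (hrel : ∀ P : Finpartition (univ : Finset (Fin n)), P.parts.card = lam →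
      ∑ S : {S : Finset (Fin n) // S.card = lam},
        (if ∀ p ∈ P.parts, (S.val ∩ p).card = 1 then y S.val else 0) = 0) :
    ∑ c ∈ C, ∑ d ∈ D, y (A ∪ {c, d}) = 0 := by
  classical
  have hcardP : (gramFinpartition A C D hC hD hCD hAC hAD hu).parts.card = lam := by
    rw [gramFinpartition_parts, card_gramParts A C D hC hD hCD hAC hAD, hA]
    omega
  have h0 := hrel _ hcardP
  rw [gramFinpartition_parts] at h0
  -- convert subtype sum to finset sum
  have h1 : ∑ S : {S : Finset (Fin n) // S.card = lam},
      (if ∀ p ∈ gramParts A C D, (S.val ∩ p).card = 1 then y S.val else 0) =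
      ∑ S ∈ (univ : Finset (Finset (Fin n))).filter (fun S => S.card = lam),
        (if ∀ p ∈ gramParts A C D, (S ∩ p).card = 1 then y S else 0) := by
    exact (Finset.sum_subtype (p := fun S => S.card = lam)
      ((univ : Finset (Finset (Fin n))).filter (fun S => S.card = lam))
      (fun S => by simp)
      (fun S => if ∀ p ∈ gramParts A C D, (S ∩ p).card = 1 then y S else 0)).symm
  rw [h1, ← Finset.sum_filter, Finset.filter_filter] at h0
  have h2 : (univ : Finset (Finset (Fin n))).filter
      (fun S => S.card = lam ∧ ∀ p ∈ gramParts A C D, (S ∩ p).card = 1) =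
      (C ×ˢ D).image (fun q => A ∪ {q.1, q.2}) := by
    ext S
    rw [Finset.mem_filter, Finset.mem_image]
    constructor
    · rintro ⟨-, h⟩
      obtain ⟨c, hc, d, hd, rfl⟩ := (transversal_iff A C D hCD hAC hAD hA hlam).mp h
      exact ⟨(c, d), Finset.mem_product.mpr ⟨hc, hd⟩, rfl⟩
    · rintro ⟨⟨c, d⟩, hq, rfl⟩
      obtain ⟨hc, hd⟩ := Finset.mem_product.mp hq
      exact ⟨Finset.mem_univ _,
        (transversal_iff A C D hCD hAC hAD hA hlam).mpr ⟨c, hc, d, hd, rfl⟩⟩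
  rw [h2, Finset.sum_image, Finset.sum_product] at h0
  · exact h0
  · rintro ⟨c, d⟩ hq ⟨c', d'⟩ hq' heq
    obtain ⟨hc, hd⟩ := Finset.mem_product.mp hq
    obtain ⟨hc', hd'⟩ := Finset.mem_product.mp hq'
    simp only [Prod.mk.injEq]
    have hmemc : c ∈ A ∪ ({c', d'} : Finset (Fin n)) := by
      rw [show A ∪ ({c', d'} : Finset (Fin n)) = A ∪ {c, d} from heq.symm]
      exact Finset.mem_union_right _ (Finset.mem_insert_self _ _)
    have hmemd : d ∈ A ∪ ({c', d'} : Finset (Fin n)) := by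
      rw [show A ∪ ({c', d'} : Finset (Fin n)) = A ∪ {c, d} from heq.symm]
      exact Finset.mem_union_right _ (Finset.mem_insert.mpr
        (Or.inr (Finset.mem_singleton_self _)))
    constructor
    · rcases Finset.mem_union.mp hmemc with h | h
      · exact absurd h (Finset.disjoint_right.mp hAC hc)
      · rcases Finset.mem_insert.mp h with h' | h'
        · exact h'
        · rw [Finset.mem_singleton] at h'
          rw [h'] at hc
          exact (Finset.disjoint_left.mp hCD hc hd').elim
    · rcases Finset.mem_union.mp hmemd with h | h
      · exact absurd h (Finset.disjoint_right.mp hAD hd)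
      · rcases Finset.mem_insert.mp h with h' | h'
        · rw [h'] at hd
          exact (Finset.disjoint_left.mp hCD hc' hd).elim
        · rw [Finset.mem_singleton] at h'
          exact h'


end GramAux


open Finset in
/-- Over a field of characteristic `0`, for `2 ≤ λ ≤ n`, the Gram
matrix of the full transformation monoid `T_n` for the two-sided cell of rank-`λ`
maps — rows indexed by the partitions of `Fin n` into exactly `λ` nonempty blocks,
columns indexed by the `λ`-element subsets of `Fin n`, with entry `1` when the
subset is a transversal of the partition and `0` otherwise — has rank `C(n, λ)`,
i.e. full column rank. -/
theorem rank_gramMatrix_transformationMonoid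
    (K : Type*) [Field K] [CharZero K] (n lam : ℕ)
    (hn : 2 ≤ n) (hl1 : 2 ≤ lam) (hl2 : lam ≤ n) :
    (Matrix.of fun (P : {P : Finpartition (Finset.univ : Finset (Fin n)) //
          P.parts.card = lam})
        (S : {S : Finset (Fin n) // S.card = lam}) =>
      if ∀ p ∈ P.val.parts, (S.val ∩ p).card = 1 then (1 : K) else (0 : K)).rank =
    n.choose lam := by
  classical
  set M : Matrix {P : Finpartition (Finset.univ : Finset (Fin n)) //
      P.parts.card = lam} {S : Finset (Fin n) // S.card = lam} K :=
    Matrix.of fun P S =>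
      if ∀ p ∈ P.val.parts, (S.val ∩ p).card = 1 then (1 : K) else (0 : K) with hM
  have hinj : Function.Injective M.mulVecLin := by
    rw [← LinearMap.ker_eq_bot, LinearMap.ker_eq_bot']
    intro x hx
    set y : Finset (Fin n) → K := fun S => if h : S.card = lam then x ⟨S, h⟩ else 0
      with hy
    have hrel : ∀ P : Finpartition (Finset.univ : Finset (Fin n)),
        P.parts.card = lam →
        ∑ S : {S : Finset (Fin n) // S.card = lam},
          (if ∀ p ∈ P.parts, (S.val ∩ p).card = 1 then y S.val else 0) = 0 := by
      intro P hP
      have hyx : ∀ S : {S : Finset (Fin n) // S.card = lam}, y S.val = x S := by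
        intro S
        simp only [hy]
        rw [dif_pos S.prop, Subtype.coe_eta]
      have h0 : M.mulVecLin x ⟨P, hP⟩ = 0 := by rw [hx]; rfl
      rw [Matrix.mulVecLin_apply] at h0
      have h1 : ∑ S : {S : Finset (Fin n) // S.card = lam},
          (if ∀ p ∈ P.parts, (S.val ∩ p).card = 1 then y S.val else 0) =
          M.mulVec x ⟨P, hP⟩ := by
        simp only [Matrix.mulVec, dotProduct, hM, Matrix.of_apply]
        refine Finset.sum_congr rfl fun S _ => ?_
        by_cases hT : ∀ p ∈ P.parts, (S.val ∩ p).card = 1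
        · rw [if_pos hT, if_pos hT, one_mul, hyx S]
        · rw [if_neg hT, if_neg hT, zero_mul]
      rw [h1, h0]
    funext S0
    show x S0 = 0
    have hxy : x S0 = y S0.val := by
      rw [hy]; simp only [dif_pos S0.prop]
    obtain ⟨c0, hc0, d0, hd0, hne⟩ :=
      Finset.one_lt_card.mp (by rw [S0.prop]; omega : 1 < S0.val.card)
    set A : Finset (Fin n) := S0.val \ {c0, d0} with hAdef
    have hsub : ({c0, d0} : Finset (Fin n)) ⊆ S0.val := by
      intro z hz
      rcases Finset.mem_insert.mp hz with rfl | hz'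
      · exact hc0
      · rw [Finset.mem_singleton.mp hz']; exact hd0
    have hA : A.card = lam - 2 := by
      rw [hAdef, Finset.card_sdiff_of_subset hsub, Finset.card_pair hne, S0.prop]
    have hS0eq : A ∪ {c0, d0} = S0.val := Finset.sdiff_union_of_subset hsub
    have hc0A : c0 ∉ A := by
      rw [hAdef]; simp
    have hd0A : d0 ∉ A := by
      rw [hAdef]; simp
    set B : Finset (Fin n) := Finset.univ \ A with hBdef
    have hAB : A ∪ B = Finset.univ :=
      Finset.union_sdiff_of_subset (Finset.subset_univ A)
    have hABdisj : Disjoint A B := Finset.disjoint_sdiff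
    have hc0B : c0 ∈ B := by rw [hBdef, Finset.mem_sdiff]; exact ⟨Finset.mem_univ _, hc0A⟩
    have hd0B : d0 ∈ B := by rw [hBdef, Finset.mem_sdiff]; exact ⟨Finset.mem_univ _, hd0A⟩
    have hpairB : ({c0, d0} : Finset (Fin n)) ⊆ B := by
      intro z hz
      rcases Finset.mem_insert.mp hz with rfl | hz'
      · exact hc0B
      · rw [Finset.mem_singleton.mp hz']; exact hd0B
    set E : Finset (Fin n) := B \ {c0, d0} with hEdef
    have hpairE : ({c0, d0} : Finset (Fin n)) ∪ E = B :=
      Finset.union_sdiff_of_subset hpairB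
    have hc0E : c0 ∉ E := by rw [hEdef]; simp
    have hd0E : d0 ∉ E := by rw [hEdef]; simp
    have hApair : Disjoint A ({c0, d0} : Finset (Fin n)) := by
      rw [Finset.disjoint_right]
      intro z hz
      rcases Finset.mem_insert.mp hz with rfl | hz'
      · exact hc0A
      · rw [Finset.mem_singleton.mp hz']; exact hd0A
    have hAE : Disjoint A E :=
      hABdisj.mono_right (Finset.sdiff_subset)
    rcases E.eq_empty_or_nonempty with hE | hE
    · -- B = {c0, d0}
      have hBeq : B = {c0, d0} := by
        rw [← hpairE, hE, Finset.union_empty]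
      have r := GramAux.rel_sum hl1 hl2 y A {c0} {d0} hA
        (Finset.singleton_nonempty c0) (Finset.singleton_nonempty d0)
        (Finset.disjoint_singleton.mpr hne)
        (Finset.disjoint_singleton_right.mpr hc0A)
        (Finset.disjoint_singleton_right.mpr hd0A)
        (by
          have h12 : ({c0} ∪ {d0} : Finset (Fin n)) = {c0, d0} := by ext z; simp
          rw [Finset.union_assoc, h12, ← hBeq, hAB]) hrel
      rw [Finset.sum_singleton, Finset.sum_singleton, hS0eq] at r
      rw [hxy, r]
    · have hBc0 : B \ {c0} = insert d0 E := by
        rw [hEdef]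
        ext z
        simp only [Finset.mem_sdiff, Finset.mem_insert, Finset.mem_singleton]
        constructor
        · rintro ⟨hz, hz2⟩
          by_cases h : z = d0
          · exact Or.inl h
          · exact Or.inr ⟨hz, by simp [hz2, h]⟩
        · rintro (rfl | ⟨hz, hz2⟩)
          · exact ⟨hd0B, Ne.symm hne⟩
          · refine ⟨hz, fun h => hz2 (by simp [h])⟩
      have hBd0 : B \ {d0} = insert c0 E := by
        rw [hEdef]
        ext z
        simp only [Finset.mem_sdiff, Finset.mem_insert, Finset.mem_singleton]
        constructor
        · rintro ⟨hz, hz2⟩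
          by_cases h : z = c0
          · exact Or.inl h
          · exact Or.inr ⟨hz, by simp [hz2, h]⟩
        · rintro (rfl | ⟨hz, hz2⟩)
          · exact ⟨hc0B, hne⟩
          · refine ⟨hz, fun h => hz2 (by simp [h])⟩
      have r1 := GramAux.rel_sum hl1 hl2 y A {c0} (B \ {c0}) hA
        (Finset.singleton_nonempty c0)
        (by rw [hBc0]; exact Finset.insert_nonempty _ _)
        (Finset.disjoint_singleton_left.mpr (by simp))
        (Finset.disjoint_singleton_right.mpr hc0A)
        (hABdisj.mono_right (Finset.sdiff_subset))
        (by rw [Finset.union_assoc,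
            Finset.union_sdiff_of_subset (Finset.singleton_subset_iff.mpr hc0B), hAB])
        hrel
      have r2 := GramAux.rel_sum hl1 hl2 y A {d0} (B \ {d0}) hA
        (Finset.singleton_nonempty d0)
        (by rw [hBd0]; exact Finset.insert_nonempty _ _)
        (Finset.disjoint_singleton_left.mpr (by simp))
        (Finset.disjoint_singleton_right.mpr hd0A)
        (hABdisj.mono_right (Finset.sdiff_subset))
        (by rw [Finset.union_assoc,
            Finset.union_sdiff_of_subset (Finset.singleton_subset_iff.mpr hd0B), hAB])
        hrel
      have r3 := GramAux.rel_sum hl1 hl2 y A {c0, d0} E hA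
        ⟨c0, Finset.mem_insert_self _ _⟩ hE
        (by rw [Finset.disjoint_left]
            intro z hz hzE
            rcases Finset.mem_insert.mp hz with rfl | hz'
            · exact hc0E hzE
            · rw [Finset.mem_singleton.mp hz'] at hzE
              exact hd0E hzE)
        hApair hAE
        (by rw [Finset.union_assoc, hpairE, hAB]) hrel
      rw [Finset.sum_singleton, hBc0, Finset.sum_insert hd0E, hS0eq] at r1
      rw [Finset.sum_singleton, hBd0, Finset.sum_insert hc0E,
        Finset.pair_comm d0 c0, hS0eq] at r2
      rw [Finset.sum_pair hne] at r3
      have h2 : (2 : K) * y S0.val = 0 := by linear_combination r1 + r2 - r3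
      rw [hxy]
      have := mul_eq_zero.mp h2
      rcases this with h | h
      · exact absurd h two_ne_zero
      · exact h
  rw [Matrix.rank, LinearMap.finrank_range_of_inj hinj, Module.finrank_pi,
    Fintype.card_finset_len, Fintype.card_fin]
end

section
/- Let K be a field of characteristic 0, let n ≥ 1 and 1 ≤ λ ≤ n. Let G be the matrix over K whose rows are indexed by the partitions of Fin n into exactly λ nonempty blocks each of which is an interval (a set of the form Icc a b), whose columns are indexed by the λ-element subsets of Fin n, and whose (P, S)-entry is 1 if S meets every block of P in exactly one element and 0 otherwise. Then the rank of G equals the binomial coefficient C(n−1, λ−1); that is, G has full row rank. -/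
open Finset

namespace PTnAux

variable {n : ℕ} [NeZero n]

/-- The largest element of `A` that is `≤ x`, assuming `0 ∈ A`. -/
def gmax (A : Finset (Fin n)) (x : Fin n) : Fin n :=
  WithBot.unbotD 0 ((A.filter (fun t => t ≤ x)).max)

variable {A : Finset (Fin n)} {x y a a' : Fin n}

lemma filter_le_nonempty (h0 : (0 : Fin n) ∈ A) (x : Fin n) :
    (A.filter (fun t => t ≤ x)).Nonempty :=
  ⟨0, mem_filter.2 ⟨h0, Fin.zero_le x⟩⟩

lemma gmax_eq_max' (h0 : (0 : Fin n) ∈ A) (x : Fin n) :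
    gmax A x = (A.filter (fun t => t ≤ x)).max' (filter_le_nonempty h0 x) := by
  rw [gmax, ← Finset.coe_max' (filter_le_nonempty h0 x), WithBot.unbotD_coe]

lemma gmax_mem (h0 : (0 : Fin n) ∈ A) (x : Fin n) : gmax A x ∈ A := by
  rw [gmax_eq_max' h0]
  exact (mem_filter.1 (Finset.max'_mem _ (filter_le_nonempty h0 x))).1

lemma gmax_le (h0 : (0 : Fin n) ∈ A) (x : Fin n) : gmax A x ≤ x := by
  rw [gmax_eq_max' h0]
  exact (mem_filter.1 (Finset.max'_mem _ (filter_le_nonempty h0 x))).2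

lemma le_gmax (h0 : (0 : Fin n) ∈ A) (ha : a ∈ A) (hax : a ≤ x) : a ≤ gmax A x := by
  have h := Finset.le_max' (A.filter (fun t => t ≤ x)) a (mem_filter.2 ⟨ha, hax⟩)
  rwa [← gmax_eq_max' h0 x] at h

lemma gmax_self (h0 : (0 : Fin n) ∈ A) (ha : a ∈ A) : gmax A a = a :=
  le_antisymm (gmax_le h0 a) (le_gmax h0 ha le_rfl)

lemma gmax_mono (h0 : (0 : Fin n) ∈ A) (hxy : x ≤ y) : gmax A x ≤ gmax A y :=
  le_gmax h0 (gmax_mem h0 x) ((gmax_le h0 x).trans hxy)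

/-- The set of elements whose largest `A`-minorant is `a`. -/
def fiber (A : Finset (Fin n)) (a : Fin n) : Finset (Fin n) :=
  univ.filter (fun x => gmax A x = a)

lemma mem_fiber : x ∈ fiber A a ↔ gmax A x = a := by simp [fiber]

lemma self_mem_fiber (h0 : (0 : Fin n) ∈ A) (ha : a ∈ A) : a ∈ fiber A a :=
  mem_fiber.2 (gmax_self h0 ha)

lemma le_of_mem_fiber (h0 : (0 : Fin n) ∈ A) (hx : x ∈ fiber A a) : a ≤ x := by
  have := gmax_le h0 x
  rwa [mem_fiber.1 hx] at this

lemma fiber_eq_Icc (h0 : (0 : Fin n) ∈ A) (ha : a ∈ A) :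
    fiber A a = Icc a ((fiber A a).max' ⟨a, self_mem_fiber h0 ha⟩) := by
  set b := (fiber A a).max' ⟨a, self_mem_fiber h0 ha⟩ with hb
  have hbmem : b ∈ fiber A a := Finset.max'_mem _ _
  ext x
  rw [mem_Icc]
  constructor
  · intro hx
    exact ⟨le_of_mem_fiber h0 hx, Finset.le_max' _ _ hx⟩
  · rintro ⟨h1, h2⟩
    refine mem_fiber.2 (le_antisymm ?_ (le_gmax h0 ha h1))
    have := gmax_mono h0 h2 (A := A)
    rwa [mem_fiber.1 hbmem] at this

lemma fiber_disjoint (haa : a ≠ a') : Disjoint (fiber A a) (fiber A a') := by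
  rw [Finset.disjoint_left]
  intro x hx hx'
  exact haa ((mem_fiber.1 hx).symm.trans (mem_fiber.1 hx'))

lemma fiber_injOn (h0 : (0 : Fin n) ∈ A) : Set.InjOn (fiber A) ↑A := by
  intro a ha a' ha' h
  have h1 := self_mem_fiber h0 ha
  rw [h] at h1
  have h2 := mem_fiber.1 h1
  rwa [gmax_self h0 ha] at h2

/-- The interval partition of `Fin n` whose blocks are the fibers of `gmax A`. -/
def partitionOf (A : Finset (Fin n)) (h0 : (0 : Fin n) ∈ A) :
    Finpartition (univ : Finset (Fin n)) where
  parts := A.image (fiber A)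
  supIndep := by
    rw [Finset.supIndep_iff_pairwiseDisjoint]
    rintro p hp q hq hpq
    simp only [coe_image, Set.mem_image, mem_coe] at hp hq
    obtain ⟨a, _, rfl⟩ := hp
    obtain ⟨a', _, rfl⟩ := hq
    exact fiber_disjoint (fun h => hpq (by rw [h]))
  sup_parts := by
    apply Finset.Subset.antisymm
    · intro x _; exact mem_univ x
    · intro x _
      rw [Finset.mem_sup]
      exact ⟨fiber A (gmax A x), mem_image_of_mem _ (gmax_mem h0 x), mem_fiber.2 rfl⟩
  bot_notMem := by
    simp only [bot_eq_empty, mem_image]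
    rintro ⟨a, ha, h⟩
    have := self_mem_fiber h0 ha
    rw [h] at this
    exact notMem_empty a this

lemma parts_partitionOf (h0 : (0 : Fin n) ∈ A) :
    (partitionOf A h0).parts = A.image (fiber A) := rfl

/-- The minimum of a nonempty finset (with junk value `0`). -/
def mins (p : Finset (Fin n)) : Fin n := WithTop.untopD 0 p.min

lemma mins_eq_min' {p : Finset (Fin n)} (h : p.Nonempty) : mins p = p.min' h := by
  rw [mins, ← Finset.coe_min' h, WithTop.untopD_coe]

lemma mins_mem {p : Finset (Fin n)} (h : p.Nonempty) : mins p ∈ p := by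
  rw [mins_eq_min' h]; exact Finset.min'_mem _ _

lemma mins_le {p : Finset (Fin n)} (h : p.Nonempty) (hx : x ∈ p) : mins p ≤ x := by
  rw [mins_eq_min' h]; exact Finset.min'_le _ _ hx

lemma mins_fiber (h0 : (0 : Fin n) ∈ A) (ha : a ∈ A) : mins (fiber A a) = a := by
  have hne : (fiber A a).Nonempty := ⟨a, self_mem_fiber h0 ha⟩
  exact le_antisymm (mins_le hne (self_mem_fiber h0 ha)) (le_of_mem_fiber h0 (mins_mem hne))

/-- The set of minima of the parts of a partition. -/
def minset (P : Finpartition (univ : Finset (Fin n))) : Finset (Fin n) :=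
  P.parts.image mins

lemma mins_mem_part {P : Finpartition (univ : Finset (Fin n))} {p : Finset (Fin n)}
    (hp : p ∈ P.parts) : mins p ∈ p :=
  mins_mem (P.nonempty_of_mem_parts hp)

lemma mins_injOn (P : Finpartition (univ : Finset (Fin n))) :
    ∀ p ∈ P.parts, ∀ q ∈ P.parts, mins p = mins q → p = q := by
  intro p hp q hq h
  exact P.eq_of_mem_parts hp hq (mins_mem_part hp) (by rw [h]; exact mins_mem_part hq)

lemma card_minset (P : Finpartition (univ : Finset (Fin n))) :
    (minset P).card = P.parts.card :=
  card_image_of_injOn (fun p hp q hq h => mins_injOn P p hp q hq h)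

lemma zero_mem_minset (P : Finpartition (univ : Finset (Fin n))) :
    (0 : Fin n) ∈ minset P := by
  have h0 : (0 : Fin n) ∈ (univ : Finset (Fin n)) := mem_univ _
  have hp := P.part_mem.2 h0
  have hm := P.mem_part h0
  have he : mins (P.part 0) = 0 :=
    le_antisymm (mins_le (P.nonempty_of_mem_parts hp) hm) (Fin.zero_le _)
  exact he ▸ mem_image_of_mem mins hp

lemma minset_partitionOf (h0 : (0 : Fin n) ∈ A) : minset (partitionOf A h0) = A := by
  rw [minset, parts_partitionOf, Finset.image_image]
  ext x
  simp only [mem_image, Function.comp_apply]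
  constructor
  · rintro ⟨a, ha, rfl⟩
    rwa [mins_fiber h0 ha]
  · intro hx
    exact ⟨x, hx, mins_fiber h0 hx⟩

/-- Any interval partition equals the fiber partition of its set of block minima. -/
lemma parts_eq (P : Finpartition (univ : Finset (Fin n)))
    (hIcc : ∀ p ∈ P.parts, ∃ a b : Fin n, p = Finset.Icc a b) :
    P.parts = (minset P).image (fiber (minset P)) := by
  set A := minset P with hA
  have h0 : (0 : Fin n) ∈ A := zero_mem_minset P
  have gkey : ∀ q ∈ P.parts, ∀ x ∈ q, gmax A x = mins q := by
    intro q hq x hx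
    obtain ⟨a, b, rfl⟩ := hIcc q hq
    have hqne : (Icc a b).Nonempty := P.nonempty_of_mem_parts hq
    have hmem : mins (Icc a b) ∈ A := mem_image_of_mem mins hq
    have h1 : mins (Icc a b) ≤ gmax A x := le_gmax h0 hmem (mins_le hqne hx)
    have h2 : gmax A x ∈ A := gmax_mem h0 x
    obtain ⟨r, hr, hre⟩ := mem_image.1 h2
    have h3 : gmax A x ∈ Icc a b := by
      rw [mem_Icc]
      exact ⟨(mem_Icc.1 (mins_mem hqne)).1.trans h1, (gmax_le h0 x).trans (mem_Icc.1 hx).2⟩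
    have h4 : Icc a b = r :=
      P.eq_of_mem_parts hq hr h3 (hre ▸ mins_mem_part hr)
    rw [← hre, h4]
  have key : ∀ p ∈ P.parts, p = fiber A (mins p) := by
    intro p hp
    ext x
    rw [mem_fiber]
    constructor
    · exact fun hx => gkey p hp x hx
    · intro hx
      have hq := P.part_mem.2 (mem_univ x)
      have h5 := gkey _ hq x (P.mem_part (mem_univ x))
      rw [hx] at h5
      rw [mins_injOn P p hp _ hq h5]
      exact P.mem_part (mem_univ x)
  apply Finset.Subset.antisymm
  · intro p hp
    exact mem_image.2 ⟨mins p, mem_image_of_mem mins hp, (key p hp).symm⟩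
  · intro p hp
    obtain ⟨a, ha, rfl⟩ := mem_image.1 hp
    obtain ⟨q, hq, rfl⟩ := mem_image.1 ha
    rw [← key q hq]
    exact hq

lemma partitionOf_minset (P : Finpartition (univ : Finset (Fin n)))
    (hIcc : ∀ p ∈ P.parts, ∃ a b : Fin n, p = Finset.Icc a b) :
    partitionOf (minset P) (zero_mem_minset P) = P := by
  apply Finpartition.ext
  rw [parts_partitionOf]
  exact (parts_eq P hIcc).symm

lemma minset_inj {P Q : Finpartition (univ : Finset (Fin n))}
    (hP : ∀ p ∈ P.parts, ∃ a b : Fin n, p = Finset.Icc a b)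
    (hQ : ∀ p ∈ Q.parts, ∃ a b : Fin n, p = Finset.Icc a b)
    (h : minset P = minset Q) : P = Q := by
  apply Finpartition.ext
  rw [parts_eq P hP, parts_eq Q hQ, h]

/-- Diagonal entries: the min-set of a partition is a transversal of it. -/
lemma inter_minset_card (P : Finpartition (univ : Finset (Fin n)))
    {p : Finset (Fin n)} (hp : p ∈ P.parts) : ((minset P) ∩ p).card = 1 := by
  have : (minset P) ∩ p = {mins p} := by
    ext x
    rw [mem_inter, mem_singleton]
    constructor
    · rintro ⟨hx1, hx2⟩
      obtain ⟨q, hq, rfl⟩ := mem_image.1 hx1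
      rw [mins_injOn P q hq p hp (mins_injOn P p hp q hq ?_ ▸ rfl)]
      · exact P.eq_of_mem_parts hp hq hx2 (mins_mem_part hq) ▸ rfl
    · rintro rfl
      exact ⟨mem_image_of_mem mins hp, mins_mem_part hp⟩
  rw [this, card_singleton]

/-- Counting lemma: a transversal of the fiber partition of `A` has, below any
threshold, at most as many elements as `A`. -/
lemma cnt_le (h0 : (0 : Fin n) ∈ A) {S : Finset (Fin n)}
    (hS : ∀ a ∈ A, (S ∩ fiber A a).card = 1) (m : ℕ) :
    (S.filter (fun s => s.1 < m)).card ≤ (A.filter (fun a => a.1 < m)).card := by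
  apply card_le_card_of_injOn (fun s => gmax A s)
  · intro s hs
    rw [mem_coe, mem_filter] at hs
    rw [mem_coe, mem_filter]
    refine ⟨gmax_mem h0 s, lt_of_le_of_lt ?_ hs.2⟩
    exact gmax_le h0 s
  · intro s hs s' hs' he
    rw [mem_coe, mem_filter] at hs hs'
    have ha : gmax A s ∈ A := gmax_mem h0 s
    have h1 : s ∈ S ∩ fiber A (gmax A s) := mem_inter.2 ⟨hs.1, mem_fiber.2 rfl⟩
    have h2 : s' ∈ S ∩ fiber A (gmax A s) := mem_inter.2 ⟨hs'.1, mem_fiber.2 he.symm⟩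
    obtain ⟨x, hx⟩ := card_eq_one.1 (hS _ ha)
    rw [hx, mem_singleton] at h1 h2
    rw [h1, h2]

/-- Weight of a subset: the sum of its elements. -/
def wt (S : Finset (Fin n)) : ℕ := ∑ s ∈ S, s.1

lemma wt_add_cnt (S : Finset (Fin n)) :
    wt S + ∑ m ∈ range n, (S.filter (fun s => s.1 < m + 1)).card = S.card * n := by
  have h2 : ∑ m ∈ range n, (S.filter (fun s => s.1 < m + 1)).card
      = ∑ s ∈ S, ((range n).filter (fun m => s.1 < m + 1)).card := by
    simp_rw [card_filter]
    rw [Finset.sum_comm]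
  rw [h2, wt, ← Finset.sum_add_distrib]
  have h3 : ∀ s ∈ S, s.1 + ((range n).filter (fun m => s.1 < m + 1)).card = n := by
    intro s _
    have he : (range n).filter (fun m => s.1 < m + 1) = Ico s.1 n := by
      ext m
      simp only [mem_filter, mem_range, mem_Ico, Nat.lt_succ_iff]
      omega
    rw [he, Nat.card_Ico]
    have := s.isLt
    omega
  rw [Finset.sum_congr rfl h3, Finset.sum_const, smul_eq_mul]

lemma mem_iff_cnt {S : Finset (Fin n)} (x : Fin n) :
    x ∈ S ↔ (S.filter (fun s => s.1 < x.1)).card < (S.filter (fun s => s.1 < x.1 + 1)).card := by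
  have hsub : S.filter (fun s => s.1 < x.1) ⊆ S.filter (fun s => s.1 < x.1 + 1) := by
    intro s hs
    rw [mem_filter] at hs ⊢
    exact ⟨hs.1, by omega⟩
  constructor
  · intro hx
    apply card_lt_card
    rw [Finset.ssubset_iff_of_subset hsub]
    exact ⟨x, mem_filter.2 ⟨hx, Nat.lt_succ_self _⟩,
      fun hmem => lt_irrefl _ (mem_filter.1 hmem).2⟩
  · intro h
    by_contra hx
    have he : S.filter (fun s => s.1 < x.1 + 1) = S.filter (fun s => s.1 < x.1) := by
      ext s
      simp only [mem_filter, and_congr_right_iff]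
      intro hsS
      constructor
      · intro hlt
        rcases Nat.lt_succ_iff_lt_or_eq.1 hlt with h' | h'
        · exact h'
        · exact absurd ((Fin.ext h' : s = x) ▸ hsS) hx
      · omega
    rw [he] at h
    exact lt_irrefl _ h

lemma wt_lt {S A : Finset (Fin n)} (hcard : S.card = A.card)
    (hcnt : ∀ m : ℕ, (S.filter (fun s => s.1 < m)).card ≤ (A.filter (fun a => a.1 < m)).card)
    (hne : S ≠ A) : wt A < wt S := by
  have hS := wt_add_cnt S
  have hA := wt_add_cnt A
  rw [hcard] at hS
  have hsum : ∑ m ∈ range n, (S.filter (fun s => s.1 < m + 1)).card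
      ≤ ∑ m ∈ range n, (A.filter (fun a => a.1 < m + 1)).card :=
    Finset.sum_le_sum (fun m _ => hcnt (m + 1))
  have hle : wt A ≤ wt S := by omega
  rcases lt_or_eq_of_le hle with h | h
  · exact h
  · exfalso
    have hsume : ∑ m ∈ range n, (S.filter (fun s => s.1 < m + 1)).card
        = ∑ m ∈ range n, (A.filter (fun a => a.1 < m + 1)).card := by omega
    have hterm := (Finset.sum_eq_sum_iff_of_le (fun m _ => hcnt (m + 1))).1 hsume
    apply hne
    ext x
    have e1 : (S.filter (fun s => s.1 < x.1 + 1)).card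
        = (A.filter (fun a => a.1 < x.1 + 1)).card := hterm x.1 (mem_range.2 x.isLt)
    have e0 : (S.filter (fun s => s.1 < x.1)).card
        = (A.filter (fun a => a.1 < x.1)).card := by
      rcases Nat.eq_zero_or_pos x.1 with h' | h'
      · rw [h']
        simp
      · have hx1 : x.1 - 1 + 1 = x.1 := by omega
        have := hterm (x.1 - 1) (mem_range.2 (by omega))
        rwa [hx1] at this
    rw [mem_iff_cnt x, mem_iff_cnt x, e0, e1]

/-- The equivalence between `λ`-subsets containing `0` and interval partitions
into `λ` blocks. -/
def rowEquiv (lam : ℕ) :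
    {A : Finset (Fin n) // (0 : Fin n) ∈ A ∧ A.card = lam} ≃
    {P : Finpartition (univ : Finset (Fin n)) //
        P.parts.card = lam ∧ ∀ p ∈ P.parts, ∃ a b : Fin n, p = Finset.Icc a b} where
  toFun A := ⟨partitionOf A.1 A.2.1, by
    constructor
    · rw [parts_partitionOf, card_image_of_injOn (fiber_injOn A.2.1)]
      exact A.2.2
    · intro p hp
      rw [parts_partitionOf] at hp
      obtain ⟨a, ha, rfl⟩ := mem_image.1 hp
      exact ⟨a, _, fiber_eq_Icc A.2.1 ha⟩⟩
  invFun P := ⟨minset P.1, zero_mem_minset P.1, by rw [card_minset]; exact P.2.1⟩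
  left_inv A := Subtype.ext (minset_partitionOf A.2.1)
  right_inv P := Subtype.ext (partitionOf_minset P.1 P.2.2)

lemma card_zero_mem (lam : ℕ) (hl1 : 1 ≤ lam) :
    Fintype.card {A : Finset (Fin n) // (0 : Fin n) ∈ A ∧ A.card = lam}
      = (n - 1).choose (lam - 1) := by
  classical
  rw [Fintype.card_subtype]
  have key : (univ.filter fun A : Finset (Fin n) => (0 : Fin n) ∈ A ∧ A.card = lam).card
      = (((univ : Finset (Fin n)).erase 0).powersetCard (lam - 1)).card := by
    apply Finset.card_bij (fun A _ => A.erase 0)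
    · intro A hA
      have hA' := (Finset.mem_filter.1 hA).2
      rw [Finset.mem_powersetCard]
      constructor
      · exact Finset.erase_subset_erase 0 (Finset.subset_univ A)
      · rw [Finset.card_erase_of_mem hA'.1, hA'.2]
    · intro A hA A' hA' he
      have h1 := (Finset.mem_filter.1 hA).2.1
      have h2 := (Finset.mem_filter.1 hA').2.1
      rw [← Finset.insert_erase h1, ← Finset.insert_erase h2, he]
    · intro B hB
      rw [Finset.mem_powersetCard] at hB
      have h0B : (0 : Fin n) ∉ B := fun h => (Finset.mem_erase.1 (hB.1 h)).1 rfl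
      refine ⟨insert 0 B, Finset.mem_filter.2 ⟨Finset.mem_univ _,
        Finset.mem_insert_self _ _, ?_⟩, ?_⟩
      · rw [Finset.card_insert_of_notMem h0B, hB.2]
        omega
      · rw [Finset.erase_insert h0B]
  rw [key, Finset.card_powersetCard, Finset.card_erase_of_mem (mem_univ _),
    Finset.card_univ, Fintype.card_fin]

end PTnAux

/-- Over a field of characteristic `0`, for `1 ≤ λ ≤ n`, the Gram
matrix of the planar transformation monoid `PT_n` for the two-sided cell of
rank-`λ` maps — rows indexed by the partitions of `Fin n` into exactly `λ` nonempty
interval blocks, columns indexed by the `λ`-element subsets of `Fin n`, with entry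
`1` when the subset is a transversal of the partition and `0` otherwise — has rank
`C(n − 1, λ − 1)`, i.e. full row rank. -/
theorem rank_gramMatrix_planarTransformationMonoid
    (K : Type*) [Field K] [CharZero K] (n lam : ℕ)
    (hn : 1 ≤ n) (hl1 : 1 ≤ lam) (hl2 : lam ≤ n) :
    (Matrix.of fun (P : {P : Finpartition (Finset.univ : Finset (Fin n)) //
          P.parts.card = lam ∧ ∀ p ∈ P.parts, ∃ a b : Fin n, p = Finset.Icc a b})
        (S : {S : Finset (Fin n) // S.card = lam}) =>
      if ∀ p ∈ P.val.parts, (S.val ∩ p).card = 1 then (1 : K) else (0 : K)).rank =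
    (n - 1).choose (lam - 1) := by
  classical
  haveI : NeZero n := ⟨by omega⟩
  set M : Matrix {P : Finpartition (Finset.univ : Finset (Fin n)) //
          P.parts.card = lam ∧ ∀ p ∈ P.parts, ∃ a b : Fin n, p = Finset.Icc a b}
        {S : Finset (Fin n) // S.card = lam} K :=
    Matrix.of (fun P S =>
      if ∀ p ∈ P.val.parts, (S.val ∩ p).card = 1 then (1 : K) else (0 : K)) with hM
  have li : LinearIndependent K M := by
    refine Fintype.linearIndependent_iff.2 ?_
    intro g hg
    suffices H : ∀ N, ∀ P, PTnAux.wt (PTnAux.minset P.1) ≤ N → g P = 0 by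
      exact fun P => H _ P le_rfl
    intro N
    induction N using Nat.strong_induction_on with
    | _ N IH =>
      intro P hP
      have hcard : (PTnAux.minset P.1).card = lam := by
        rw [PTnAux.card_minset]; exact P.2.1
      have hg' := congrFun hg ⟨PTnAux.minset P.1, hcard⟩
      simp only [Finset.sum_apply, Pi.smul_apply, smul_eq_mul, Pi.zero_apply] at hg'
      rw [← Finset.add_sum_erase _ _ (Finset.mem_univ P)] at hg'
      have hdiag : M P ⟨PTnAux.minset P.1, hcard⟩ = 1 := by
        show (if ∀ p ∈ P.1.parts, ((PTnAux.minset P.1) ∩ p).card = 1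
            then (1 : K) else 0) = 1
        exact if_pos (fun p hp => PTnAux.inter_minset_card P.1 hp)
      have hrest : ∀ Q ∈ Finset.univ.erase P,
          g Q * M Q ⟨PTnAux.minset P.1, hcard⟩ = 0 := by
        intro Q hQ
        by_cases htr : ∀ p ∈ Q.1.parts, ((PTnAux.minset P.1) ∩ p).card = 1
        · have hQP : Q ≠ P := Finset.ne_of_mem_erase hQ
          have h0A : (0 : Fin n) ∈ PTnAux.minset Q.1 := PTnAux.zero_mem_minset Q.1
          have hparts := PTnAux.parts_eq Q.1 Q.2.2
          have hfib : ∀ a ∈ PTnAux.minset Q.1,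
              ((PTnAux.minset P.1) ∩ PTnAux.fiber (PTnAux.minset Q.1) a).card = 1 := by
            intro a ha
            exact htr _ (by rw [hparts]; exact Finset.mem_image_of_mem _ ha)
          have hcnt := fun m => PTnAux.cnt_le h0A hfib m
          have hSA : PTnAux.minset P.1 ≠ PTnAux.minset Q.1 := by
            intro he
            exact hQP (Subtype.ext (PTnAux.minset_inj Q.2.2 P.2.2 he.symm))
          have hwt : PTnAux.wt (PTnAux.minset Q.1) < PTnAux.wt (PTnAux.minset P.1) := by
            apply PTnAux.wt_lt ?_ hcnt hSA
            rw [hcard, PTnAux.card_minset]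
            exact Q.2.1.symm
          have hz : g Q = 0 := IH _ (lt_of_lt_of_le hwt hP) Q le_rfl
          rw [hz, zero_mul]
        · have hz : M Q ⟨PTnAux.minset P.1, hcard⟩ = 0 := by
            show (if ∀ p ∈ Q.1.parts, ((PTnAux.minset P.1) ∩ p).card = 1
                then (1 : K) else 0) = 0
            exact if_neg htr
          rw [hz, mul_zero]
      rw [Finset.sum_eq_zero hrest, add_zero, hdiag, mul_one] at hg'
      exact hg'
  rw [li.rank_matrix]
  rw [Fintype.card_congr (PTnAux.rowEquiv lam).symm]
  exact PTnAux.card_zero_mem lam hl1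
end

section
/- Let R be a commutative ring, n ≥ 3 a natural number, and δ ∈ R. Let G be the square matrix over R whose rows and columns are indexed by the 2-element subsets of Fin n, with entries G[s, t] = δ if s = t, G[s, t] = 1 if s and t share exactly one element, and G[s, t] = 0 if s and t are disjoint. Then det G = (δ − 2)^{n(n−3)/2} · (δ + n − 4)^{n−1} · (δ + 2n − 4), where integers are interpreted in R via the canonical ring map. -/
open Matrix Polynomial Finset

lemma brauer_count_pair {n : ℕ} (i j : Fin n) (hij : i ≠ j) :
    (Finset.univ.filter fun s : {s : Finset (Fin n) // s.card = 2} =>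
      i ∈ s.val ∧ j ∈ s.val).card = 1 := by
  have : (Finset.univ.filter fun s : {s : Finset (Fin n) // s.card = 2} =>
      i ∈ s.val ∧ j ∈ s.val) = {⟨{i, j}, Finset.card_pair hij⟩} := by
    ext ⟨s, hs⟩
    simp only [Finset.mem_filter, Finset.mem_univ, true_and, Finset.mem_singleton,
      Subtype.mk.injEq]
    constructor
    · rintro ⟨hi, hj⟩
      refine (Finset.eq_of_subset_of_card_le ?_ ?_).symm
      · intro x hx
        rcases Finset.mem_insert.mp hx with rfl | hx
        · exact hi
        · rw [Finset.mem_singleton.mp hx]; exact hj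
      · rw [hs, Finset.card_pair hij]
    · rintro rfl
      simp
  rw [this, Finset.card_singleton]

lemma brauer_count_single {n : ℕ} (i : Fin n) :
    (Finset.univ.filter fun s : {s : Finset (Fin n) // s.card = 2} =>
      i ∈ s.val).card = n - 1 := by
  have := Finset.card_bij
    (s := (Finset.univ.erase i))
    (t := Finset.univ.filter fun s : {s : Finset (Fin n) // s.card = 2} => i ∈ s.val)
    (fun j hj => ⟨{i, j}, Finset.card_pair (Finset.ne_of_mem_erase hj).symm⟩)
    (fun j hj => by simp)
    (fun a ha b hb h => by
      simp only [Subtype.mk.injEq] at h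
      have : a ∈ ({i, b} : Finset (Fin n)) := by rw [← h]; simp
      rcases Finset.mem_insert.mp this with rfl | h2
      · exact absurd rfl (Finset.ne_of_mem_erase ha)
      · exact Finset.mem_singleton.mp h2)
    (fun b hb => by
      obtain ⟨s, hs⟩ := b
      simp only [Finset.mem_filter] at hb
      obtain ⟨x, y, hxy, rfl⟩ := Finset.card_eq_two.mp hs
      rcases Finset.mem_insert.mp hb.2 with rfl | h2
      · exact ⟨y, Finset.mem_erase.mpr ⟨hxy.symm, Finset.mem_univ _⟩, rfl⟩
      · rw [Finset.mem_singleton.mp h2]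
        exact ⟨x, Finset.mem_erase.mpr ⟨hxy, Finset.mem_univ _⟩,
          Subtype.ext (Finset.pair_comm _ _)⟩)
  rw [← this]
  simp [Finset.card_erase_of_mem]

lemma brauer_choose_two (n : ℕ) (hn : 3 ≤ n) : n.choose 2 = n * (n - 3) / 2 + n := by
  rw [Nat.choose_two_right, show n - 1 = (n - 3) + 2 by omega, Nat.mul_add,
    Nat.add_mul_div_right _ _ (by norm_num : (0:ℕ) < 2)]

lemma brauer_det_aI_add_J {F : Type*} [Field F] (n : ℕ) (hn : 1 ≤ n) (a : F) (ha : a ≠ 0) :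
    (a • (1 : Matrix (Fin n) (Fin n) F) + Matrix.of fun _ _ => 1).det
      = a ^ (n - 1) * (a + n) := by
  set u : Matrix (Fin n) (Fin 1) F := Matrix.of fun _ _ => 1 with hu
  have hJ : (Matrix.of fun _ _ => (1:F) : Matrix (Fin n) (Fin n) F) = u * uᵀ := by
    ext i j; simp [Matrix.mul_apply, hu]
  have factor : a • (1 : Matrix (Fin n) (Fin n) F) + u * uᵀ
      = a • (1 + u * (a⁻¹ • uᵀ)) := by
    rw [smul_add, Matrix.mul_smul, smul_smul, mul_inv_cancel₀ ha, one_smul]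
  rw [hJ, factor, Matrix.det_smul, Matrix.det_one_add_mul_comm]
  have : ((a⁻¹ • uᵀ) * u : Matrix (Fin 1) (Fin 1) F) 0 0 = a⁻¹ * n := by
    simp [Matrix.mul_apply, hu, mul_comm]
  rw [Matrix.det_fin_one, Matrix.add_apply, Matrix.one_apply_eq, this, Fintype.card_fin]
  rw [show n = (n - 1) + 1 by omega, pow_succ]
  have : a * (1 + a⁻¹ * ((n-1:ℕ) + 1 : ℕ)) = a + ((n-1:ℕ)+1 : ℕ) := by
    field_simp
  push_cast at this ⊢
  rw [mul_assoc, this]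


lemma brauer_det_field {F : Type*} [Field F] (n : ℕ) (hn : 3 ≤ n) (c : F)
    (h2 : c - 2 ≠ 0) (h4 : c + (n : F) - 4 ≠ 0) :
    (Matrix.of fun s t : {s : Finset (Fin n) // s.card = 2} =>
      if s = t then c else if (s.val ∩ t.val).card = 1 then (1 : F) else 0).det =
    (c - 2) ^ (n * (n - 3) / 2) * (c + (n : F) - 4) ^ (n - 1) * (c + 2 * (n : F) - 4) := by
  set N : Matrix (Fin n) {s : Finset (Fin n) // s.card = 2} F :=
    Matrix.of fun i s => if i ∈ s.val then 1 else 0 with hN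
  have hNtN : ∀ s t : {s : Finset (Fin n) // s.card = 2},
      (Nᵀ * N) s t = ((s.val ∩ t.val).card : F) := by
    intro s t
    rw [Matrix.mul_apply]
    have h : ∀ i : Fin n, Nᵀ s i * N i t = if i ∈ s.val ∩ t.val then (1:F) else 0 := by
      intro i
      simp only [hN, Matrix.transpose_apply, Matrix.of_apply, Finset.mem_inter, ite_and,
        ite_mul, one_mul, zero_mul, mul_ite, mul_one, mul_zero]
      split_ifs <;> rfl
    rw [Finset.sum_congr rfl fun i _ => h i, Finset.sum_boole,
      Finset.filter_mem_eq_inter, Finset.univ_inter]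
  have hG : (Matrix.of fun s t : {s : Finset (Fin n) // s.card = 2} =>
        if s = t then c else if (s.val ∩ t.val).card = 1 then (1 : F) else 0)
      = (c - 2) • 1 + Nᵀ * N := by
    ext s t
    rw [Matrix.add_apply, Matrix.smul_apply, hNtN, Matrix.of_apply]
    by_cases hst : s = t
    · subst hst
      rw [if_pos rfl, Matrix.one_apply_eq, smul_eq_mul, Finset.inter_self, s.prop]
      push_cast; ring
    · rw [if_neg hst, Matrix.one_apply_ne hst, smul_zero, zero_add]
      have hle : (s.val ∩ t.val).card ≤ 2 := by
        calc (s.val ∩ t.val).card ≤ s.val.card := Finset.card_le_card Finset.inter_subset_left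
        _ = 2 := s.prop
      have hne : (s.val ∩ t.val).card ≠ 2 := by
        intro h
        have h1 : s.val ∩ t.val = s.val :=
          Finset.eq_of_subset_of_card_le Finset.inter_subset_left (by rw [s.prop, h])
        have h2' : s.val ∩ t.val = t.val :=
          Finset.eq_of_subset_of_card_le Finset.inter_subset_right (by rw [t.prop, h])
        exact hst (Subtype.ext (h1 ▸ h2'))
      have : (s.val ∩ t.val).card = 0 ∨ (s.val ∩ t.val).card = 1 := by omega
      rcases this with h | h <;> rw [h] <;> simp
  rw [hG]
  have f1 : (c - 2) • (1 : Matrix {s : Finset (Fin n) // s.card = 2}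
        {s : Finset (Fin n) // s.card = 2} F) + Nᵀ * N
      = (c - 2) • (1 + Nᵀ * ((c - 2)⁻¹ • N)) := by
    rw [smul_add, Matrix.mul_smul, smul_smul, mul_inv_cancel₀ h2, one_smul]
  rw [f1, Matrix.det_smul, Matrix.det_one_add_mul_comm]
  have f2 : (1 : Matrix (Fin n) (Fin n) F) + ((c - 2)⁻¹ • N) * Nᵀ
      = (c - 2)⁻¹ • ((c - 2) • 1 + N * Nᵀ) := by
    rw [Matrix.smul_mul, smul_add, smul_smul, inv_mul_cancel₀ h2, one_smul]
  rw [f2, Matrix.det_smul]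
  have hNNt : (c - 2) • (1 : Matrix (Fin n) (Fin n) F) + N * Nᵀ
      = (c + (n:F) - 4) • 1 + Matrix.of fun _ _ => 1 := by
    ext i j
    have hentry : (N * Nᵀ) i j
        = ((Finset.univ.filter fun s : {s : Finset (Fin n) // s.card = 2} =>
            i ∈ s.val ∧ j ∈ s.val).card : F) := by
      rw [Matrix.mul_apply]
      have h : ∀ s : {s : Finset (Fin n) // s.card = 2},
          N i s * Nᵀ s j = if i ∈ s.val ∧ j ∈ s.val then (1:F) else 0 := by
        intro s
        simp only [hN, Matrix.transpose_apply, Matrix.of_apply, ite_and,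
          ite_mul, one_mul, zero_mul, mul_ite, mul_one, mul_zero]
        split_ifs <;> rfl
      rw [Finset.sum_congr rfl fun s _ => h s, Finset.sum_boole]
    by_cases hij : i = j
    · subst hij
      simp only [Matrix.add_apply, Matrix.smul_apply, Matrix.one_apply_eq, smul_eq_mul,
        Matrix.of_apply, hentry]
      have e1 : (Finset.univ.filter fun s : {s : Finset (Fin n) // s.card = 2} =>
            i ∈ s.val ∧ i ∈ s.val)
          = Finset.univ.filter fun s : {s : Finset (Fin n) // s.card = 2} => i ∈ s.val := by
        simp
      rw [e1, brauer_count_single, Nat.cast_sub (by omega : 1 ≤ n)]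
      push_cast; ring
    · simp only [Matrix.add_apply, Matrix.smul_apply, Matrix.one_apply_ne hij, smul_zero,
        Matrix.of_apply, hentry, zero_add]
      rw [brauer_count_pair i j hij]
      push_cast; ring
  rw [hNNt, brauer_det_aI_add_J n (by omega) _ h4]
  have hcard : Fintype.card {s : Finset (Fin n) // s.card = 2} = n * (n - 3) / 2 + n := by
    rw [Fintype.card_finset_len, Fintype.card_fin, brauer_choose_two n hn]
  rw [hcard, pow_add, Fintype.card_fin]
  have hcancel : (c - 2) ^ n * ((c - 2)⁻¹) ^ n = 1 := by
    rw [← mul_pow, mul_inv_cancel₀ h2, one_pow]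
  calc (c - 2) ^ (n * (n - 3) / 2) * (c - 2) ^ n
        * (((c - 2)⁻¹) ^ n * ((c + (n:F) - 4) ^ (n - 1) * (c + (n:F) - 4 + n)))
      = ((c - 2) ^ n * ((c - 2)⁻¹) ^ n)
        * ((c - 2) ^ (n * (n - 3) / 2) * ((c + (n:F) - 4) ^ (n - 1) * (c + (n:F) - 4 + n))) := by
        ring
    _ = (c - 2) ^ (n * (n - 3) / 2) * (c + (n:F) - 4) ^ (n - 1) * (c + 2 * (n:F) - 4) := by
        rw [hcancel, one_mul]; ring


/-- Let `R` be a commutative ring, `n ≥ 3` and `δ ∈ R`. The Gram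
matrix of the Brauer algebra `Br_n(δ)` for the cell with `n − 2` through strands —
rows and columns indexed by the `2`-element subsets of `Fin n`, with entry `δ` on
the diagonal, `1` when the two subsets share exactly one element, and `0` when they
are disjoint — has determinant
`(δ − 2)^(n(n−3)/2) · (δ + n − 4)^(n−1) · (δ + 2n − 4)`. -/
theorem det_gramMatrix_brauer
    {R : Type*} [CommRing R] (n : ℕ) (hn : 3 ≤ n) (δ : R) :
    (Matrix.of fun s t : {s : Finset (Fin n) // s.card = 2} =>
      if s = t then δ else if (s.val ∩ t.val).card = 1 then (1 : R) else 0).det =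
    (δ - 2) ^ (n * (n - 3) / 2) * (δ + (n : R) - 4) ^ (n - 1) *
      (δ + 2 * (n : R) - 4) := by
  have key : (Matrix.of fun s t : {s : Finset (Fin n) // s.card = 2} =>
      if s = t then (X : ℤ[X]) else if (s.val ∩ t.val).card = 1 then 1 else 0).det =
      (X - 2) ^ (n * (n - 3) / 2) * (X + (n : ℤ[X]) - 4) ^ (n - 1)
        * (X + 2 * (n : ℤ[X]) - 4) := by
    set ψ : ℤ[X] →+* RatFunc ℚ :=
      (algebraMap ℚ[X] (RatFunc ℚ)).comp (Polynomial.mapRingHom (Int.castRingHom ℚ)) with hψ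
    have hinj : Function.Injective ψ :=
      (RatFunc.algebraMap_injective ℚ).comp
        (Polynomial.map_injective _ Int.cast_injective)
    have hX2 : (X - 2 : ℤ[X]) ≠ 0 := by
      simpa using Polynomial.X_sub_C_ne_zero (2 : ℤ)
    have hXn : (X + (n : ℤ[X]) - 4 : ℤ[X]) ≠ 0 := by
      have h0 := Polynomial.X_add_C_ne_zero ((n : ℤ) - 4)
      have e : (C ((n:ℤ) - 4) : ℤ[X]) = (n : ℤ[X]) - 4 := by
        rw [map_sub, map_natCast, map_ofNat]
      rw [e] at h0
      intro h; exact h0 (by linear_combination h)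
    have h2 : ψ X - 2 ≠ 0 := by
      have h0 : ψ (X - 2) ≠ 0 := fun h0 => hX2 (hinj (by simpa using h0))
      simpa [map_sub, map_ofNat] using h0
    have h4 : ψ X + (n : RatFunc ℚ) - 4 ≠ 0 := by
      have h0 : ψ (X + (n : ℤ[X]) - 4) ≠ 0 := fun h0 => hXn (hinj (by simpa using h0))
      simpa [map_sub, map_add, map_ofNat, map_natCast] using h0
    apply hinj
    rw [RingHom.map_det]
    have hmap : ψ.mapMatrix (Matrix.of fun s t : {s : Finset (Fin n) // s.card = 2} =>
        if s = t then (X : ℤ[X]) else if (s.val ∩ t.val).card = 1 then 1 else 0)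
        = Matrix.of fun s t : {s : Finset (Fin n) // s.card = 2} =>
        if s = t then ψ X else if (s.val ∩ t.val).card = 1 then (1 : RatFunc ℚ) else 0 := by
      ext s t
      simp [RingHom.mapMatrix_apply, Matrix.map_apply, apply_ite ψ]
    rw [hmap, brauer_det_field n hn (ψ X) h2 h4]
    simp [_root_.map_mul, map_pow, map_sub, map_add, map_natCast, map_ofNat]
  have hmapR : (Matrix.of fun s t : {s : Finset (Fin n) // s.card = 2} =>
      if s = t then δ else if (s.val ∩ t.val).card = 1 then (1 : R) else 0)
      = (Polynomial.aeval δ : ℤ[X] →ₐ[ℤ] R).mapMatrix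
        (Matrix.of fun s t : {s : Finset (Fin n) // s.card = 2} =>
        if s = t then (X : ℤ[X]) else if (s.val ∩ t.val).card = 1 then 1 else 0) := by
    ext s t
    simp [AlgHom.mapMatrix_apply, Matrix.map_apply, apply_ite (Polynomial.aeval δ)]
  rw [hmapR, ← AlgHom.map_det, key]
  simp [_root_.map_mul, map_pow, map_sub, map_add, map_natCast, map_ofNat]
end

section
/- Let K be a field of characteristic 0, n ≥ 3 a natural number, and δ ∈ K. Let G be the square matrix over K whose rows and columns are indexed by the 2-element subsets of Fin n, with entries G[s, t] = δ if s = t, G[s, t] = 1 if s and t share exactly one element, and G[s, t] = 0 if s and t are disjoint. Then: if δ ∉ {2, 4 − n, 4 − 2n} then rank G = n(n−1)/2 (full rank); if δ = 2 then rank G = n; if δ = 4 − n then rank G = n(n−3)/2 + 1; and if δ = 4 − 2n then rank G = (n+1)(n−2)/2. (Here integers are interpreted in K via the canonical map.) -/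
open Matrix Finset

section Aux

variable {K : Type*} [Field K] {m : Type*} [Fintype m] [DecidableEq m]

private lemma expand3 (G : Matrix m m K) (r s t : K) :
    (G - r • 1) * (G - s • 1) * (G - t • 1)
      = G * G * G - (r + s + t) • (G * G) + (r * s + s * t + t * r) • G - (r * s * t) • 1 := by
  simp only [Matrix.sub_mul, Matrix.mul_sub, Matrix.smul_mul, Matrix.mul_smul,
    Matrix.one_mul, Matrix.mul_one, smul_smul, add_smul, smul_sub, sub_smul]
  module

private theorem rank_eq_trace_of_idem (Q : Matrix m m K) (h : Q * Q = Q) :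
    (Q.rank : K) = Q.trace := by
  have hf : Q.mulVecLin ∘ₗ Q.mulVecLin = Q.mulVecLin := by
    rw [← Matrix.mulVecLin_mul, h]
  have hproj : LinearMap.IsProj (LinearMap.range Q.mulVecLin) Q.mulVecLin := by
    constructor
    · intro x; exact LinearMap.mem_range_self _ x
    · rintro x ⟨y, rfl⟩
      exact congrFun (congrArg (·.toFun) hf) y
  have := hproj.trace
  rw [LinearMap.trace_eq_matrix_trace K (Pi.basisFun K m), LinearMap.toMatrix_eq_toMatrix',
    ← Matrix.toLin'_apply', LinearMap.toMatrix'_toLin'] at this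
  rw [Matrix.rank, this, Matrix.toLin'_apply']

private lemma rank_full_of_cubic (G : Matrix m m K) (r s t : K)
    (hr : r ≠ 0) (hs : s ≠ 0) (ht : t ≠ 0)
    (h : (G - r • 1) * (G - s • 1) * (G - t • 1) = 0) : G.rank = Fintype.card m := by
  have h3 : G * G * G - (r + s + t) • (G * G) + (r * s + s * t + t * r) • G
      = (r * s * t) • 1 := by
    have he := expand3 G r s t
    rw [h] at he
    have := he.symm
    rwa [sub_eq_zero] at this
  have h2 : G * ((r * s * t)⁻¹ • (G * G - (r + s + t) • G + (r * s + s * t + t * r) • 1)) = 1 := by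
    rw [Matrix.mul_smul]
    have : G * (G * G - (r + s + t) • G + (r * s + s * t + t * r) • 1)
        = G * G * G - (r + s + t) • (G * G) + (r * s + s * t + t * r) • G := by
      rw [Matrix.mul_add, Matrix.mul_sub, Matrix.mul_smul, Matrix.mul_smul, Matrix.mul_one,
        Matrix.mul_assoc]
    rw [this, h3, smul_smul, inv_mul_cancel₀ (by simp [hr, hs, ht]), one_smul]
  refine le_antisymm (Matrix.rank_le_card_width G) ?_
  calc Fintype.card m = (1 : Matrix m m K).rank := (Matrix.rank_one).symm
    _ = (G * _).rank := by rw [h2]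
    _ ≤ G.rank := Matrix.rank_mul_le_left _ _

private lemma rank_trace_of_cubic (G : Matrix m m K) (a b : K) (ha : a ≠ 0) (hb : b ≠ 0)
    (h3 : G * G * G = (a + b) • (G * G) - (a * b) • G) :
    (G.rank : K) = (a * b)⁻¹ * ((a + b) * G.trace - (G * G).trace) := by
  set Q : Matrix m m K := (a * b)⁻¹ • ((a + b) • G - G * G) with hQ
  have h4 : G * G * G * G = ((a + b) * (a + b) - a * b) • (G * G)
      - ((a + b) * (a * b)) • G := by
    rw [h3, Matrix.sub_mul, Matrix.smul_mul, Matrix.smul_mul, h3]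
    module
  have e1 : G * G * (G * G) = G * G * G * G := (Matrix.mul_assoc (G * G) G G).symm
  have e2 : G * (G * G) = G * G * G := (Matrix.mul_assoc G G G).symm
  have hQ2 : Q * Q = Q := by
    rw [hQ, Matrix.smul_mul, Matrix.mul_smul, smul_smul]
    rw [Matrix.sub_mul, Matrix.smul_mul, Matrix.mul_sub, Matrix.mul_sub, Matrix.mul_smul,
      Matrix.mul_smul]
    rw [e1, e2, h4, h3]
    match_scalars <;> field_simp <;> ring
  have hGQ : G * Q = G := by
    rw [hQ, Matrix.mul_smul, Matrix.mul_sub, Matrix.mul_smul, e2, h3, sub_sub_cancel,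
      smul_smul, inv_mul_cancel₀ (mul_ne_zero ha hb), one_smul]
  have hQG : Q = ((a * b)⁻¹ • ((a + b) • 1 - G)) * G := by
    rw [hQ, Matrix.smul_mul, Matrix.sub_mul, Matrix.smul_mul, Matrix.one_mul]
  have hrank : G.rank = Q.rank := by
    refine le_antisymm ?_ ?_
    · calc G.rank = (G * Q).rank := by rw [hGQ]
        _ ≤ Q.rank := Matrix.rank_mul_le_right _ _
    · calc Q.rank = (_ * G).rank := by rw [hQG]
        _ ≤ G.rank := Matrix.rank_mul_le_right _ _
  rw [hrank, rank_eq_trace_of_idem Q hQ2, hQ]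
  rw [Matrix.trace_smul, Matrix.trace_sub, Matrix.trace_smul]
  simp only [smul_eq_mul]

end Aux

section Comb

variable {K : Type*} [Field K] {n : ℕ}

private abbrev E2 (n : ℕ) := {s : Finset (Fin n) // s.card = 2}

private noncomputable def Mm (K : Type*) [Field K] (n : ℕ) : Matrix (E2 n) (E2 n) K :=
  Matrix.of fun s t => ((s.val ∩ t.val).card : K)

private def Jm (K : Type*) [Field K] (n : ℕ) : Matrix (E2 n) (E2 n) K :=
  Matrix.of fun _ _ => 1

private def Bm (K : Type*) [Field K] (n : ℕ) : Matrix (Fin n) (E2 n) K :=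
  Matrix.of fun i s => if i ∈ s.val then 1 else 0

private lemma hBtB : (Bm K n)ᵀ * (Bm K n) = Mm K n := by
  ext s t
  simp only [Matrix.mul_apply, Matrix.transpose_apply, Bm, Mm, Matrix.of_apply,
    ite_mul, one_mul, zero_mul, ← ite_and, ← Finset.mem_inter]
  rw [Finset.sum_boole, Finset.filter_univ_mem]

private lemma pair_card {i k : Fin n} (h : k ≠ i) : ({i, k} : Finset (Fin n)).card = 2 := by
  rw [Finset.card_insert_of_notMem (by simp [h.symm]), Finset.card_singleton]

private lemma count_pair_ne (i j : Fin n) (hij : i ≠ j) :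
    (Finset.univ.filter (fun s : E2 n => i ∈ s.val ∧ j ∈ s.val)) =
      {⟨{i,j}, pair_card (Ne.symm hij)⟩} := by
  ext s
  simp only [Finset.mem_filter, Finset.mem_univ, true_and, Finset.mem_singleton]
  constructor
  · rintro ⟨h1, h2⟩
    have hsub : ({i, j} : Finset (Fin n)) ⊆ s.val := by
      intro x hx; simp at hx; rcases hx with rfl | rfl <;> assumption
    have : ({i, j} : Finset (Fin n)) = s.val := by
      apply Finset.eq_of_subset_of_card_le hsub
      rw [s.2, pair_card (Ne.symm hij)]
    exact Subtype.ext this.symm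
  · rintro rfl; constructor <;> simp

private lemma count_pair_eq (i : Fin n) :
    (Finset.univ.filter (fun s : E2 n => i ∈ s.val)).card = n - 1 := by
  have key : ((Finset.univ : Finset (Fin n)).erase i).card
      = (Finset.univ.filter (fun s : E2 n => i ∈ s.val)).card := by
    apply Finset.card_bij (fun k hk => (⟨{i, k}, pair_card (Finset.ne_of_mem_erase hk)⟩ : E2 n))
    · intro k hk; simp
    · intro k1 h1 k2 h2 heq
      have h1' := Finset.ne_of_mem_erase h1
      have := congrArg (fun s : E2 n => k1 ∈ s.val) heq
      simp [h1'] at this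
      tauto
    · intro s hs
      simp only [Finset.mem_filter, Finset.mem_univ, true_and] at hs
      have hc : (s.val.erase i).card = 1 := by
        rw [Finset.card_erase_of_mem hs, s.2]
      obtain ⟨k, hk⟩ := Finset.card_eq_one.mp hc
      have hki : k ≠ i := by
        have : k ∈ s.val.erase i := by rw [hk]; exact Finset.mem_singleton_self k
        exact Finset.ne_of_mem_erase this
      refine ⟨k, Finset.mem_erase.mpr ⟨hki, Finset.mem_univ k⟩, ?_⟩
      apply Subtype.ext
      show ({i, k} : Finset (Fin n)) = s.val
      have : insert i (s.val.erase i) = s.val := Finset.insert_erase hs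
      rw [← this, hk]
  rw [← key, Finset.card_erase_of_mem (Finset.mem_univ i), Finset.card_univ, Fintype.card_fin]

private lemma hBBt (hn : 1 ≤ n) :
    (Bm K n) * (Bm K n)ᵀ = ((n : K) - 2) • 1 + Matrix.of fun _ _ => (1:K) := by
  ext i j
  simp only [Matrix.mul_apply, Matrix.transpose_apply, Bm, Matrix.of_apply,
    ite_mul, one_mul, zero_mul, ← ite_and, Matrix.add_apply, Matrix.smul_apply,
    Matrix.one_apply, smul_eq_mul]
  rw [Finset.sum_boole]
  by_cases hij : i = j
  · subst hij
    simp only [and_self]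
    rw [count_pair_eq i, Nat.cast_sub hn]
    simp
    ring
  · rw [count_pair_ne i j hij, Finset.card_singleton, if_neg hij]
    push_cast; ring

private lemma colsum (s : E2 n) : ∑ i, Bm K n i s = 2 := by
  simp only [Bm, Matrix.of_apply, Finset.sum_boole, Finset.filter_univ_mem]
  rw [s.2]; norm_num

private lemma rowsum (hn : 1 ≤ n) (i : Fin n) : ∑ s, Bm K n i s = (n : K) - 1 := by
  simp only [Bm, Matrix.of_apply, Finset.sum_boole]
  rw [count_pair_eq i, Nat.cast_sub hn, Nat.cast_one]

private lemma hBJB : (Bm K n)ᵀ * ((Matrix.of fun _ _ => (1:K) : Matrix (Fin n) (Fin n) K) * Bm K n)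
    = (4 : K) • Jm K n := by
  ext s t
  have inner : ∀ i, ((Matrix.of fun _ _ => (1:K) : Matrix (Fin n) (Fin n) K) * Bm K n) i t
      = 2 := fun i => by
    rw [Matrix.mul_apply]
    simp only [Matrix.of_apply, one_mul]
    exact colsum t
  rw [Matrix.mul_apply, Finset.sum_congr rfl (fun i _ => by rw [inner i]),
    ← Finset.sum_mul]
  have : ∑ i, (Bm K n)ᵀ s i = 2 := colsum s
  rw [this]
  simp [Jm]
  norm_num

private lemma hM2 (hn : 1 ≤ n) : Mm K n * Mm K n = ((n : K) - 2) • Mm K n + (4 : K) • Jm K n := by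
  rw [← hBtB, Matrix.mul_assoc, ← Matrix.mul_assoc (Bm K n), hBBt hn, Matrix.add_mul,
    Matrix.mul_add, Matrix.smul_mul, Matrix.one_mul, Matrix.mul_smul, hBtB, hBJB]

private lemma hBJE (hn : 1 ≤ n) :
    (Bm K n) * Jm K n = ((n:K) - 1) • Matrix.of (fun (_ : Fin n) (_ : E2 n) => (1:K)) := by
  ext i t
  rw [Matrix.mul_apply]
  simp only [Jm, Matrix.of_apply, mul_one, Matrix.smul_apply, smul_eq_mul]
  rw [rowsum hn i]

private lemma hBtJE : (Bm K n)ᵀ * Matrix.of (fun (_ : Fin n) (_ : E2 n) => (1:K))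
    = (2:K) • Jm K n := by
  ext s t
  rw [Matrix.mul_apply]
  simp only [Matrix.transpose_apply, Matrix.of_apply, mul_one, Matrix.smul_apply, Jm,
    smul_eq_mul]
  rw [colsum s]

private lemma hMJ (hn : 1 ≤ n) : Mm K n * Jm K n = (2 * ((n:K) - 1)) • Jm K n := by
  rw [← hBtB, Matrix.mul_assoc, hBJE hn, Matrix.mul_smul, hBtJE, smul_smul]
  ring_nf

private lemma hMsymm : (Mm K n)ᵀ = Mm K n := by
  ext s t
  simp [Mm, Finset.inter_comm]

private lemma hJM (hn : 1 ≤ n) : Jm K n * Mm K n = (2 * ((n:K) - 1)) • Jm K n := by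
  have hJsymm : (Jm K n)ᵀ = Jm K n := by ext s t; simp [Jm]
  have := congrArg Matrix.transpose (hMJ (K := K) (n := n) hn)
  rw [Matrix.transpose_mul, hMsymm, hJsymm, Matrix.transpose_smul, hJsymm] at this
  exact this

private lemma hfact (hn : 1 ≤ n) :
    Mm K n * (Mm K n - ((n:K) - 2) • 1) * (Mm K n - (2 * (n:K) - 2) • 1) = 0 := by
  have h1 : Mm K n * (Mm K n - ((n:K) - 2) • 1) = (4:K) • Jm K n := by
    rw [Matrix.mul_sub, Matrix.mul_smul, Matrix.mul_one, hM2 hn]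
    abel
  rw [h1, Matrix.smul_mul, Matrix.mul_sub, Matrix.mul_smul, Matrix.mul_one, hJM hn,
    smul_sub, smul_smul, smul_smul]
  rw [(by ring : (4:K) * (2 * ((n:K) - 1)) = 4 * (2 * (n:K) - 2))]
  abel

end Comb

/-- The Gram matrix of the Brauer algebra `Br_n(δ)` for the cell with `n − 2`
through strands: rows and columns are indexed by the `2`-element subsets of
`Fin n`; the entry is `δ` on the diagonal, `1` when the two subsets share exactly
one element, and `0` when they are disjoint. -/
def brauerGram (K : Type*) [Field K] (n : ℕ) (δ : K) :
    Matrix {s : Finset (Fin n) // s.card = 2} {s : Finset (Fin n) // s.card = 2} K :=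
  Matrix.of fun s t =>
    if s = t then δ else if (s.val ∩ t.val).card = 1 then (1 : K) else 0

section Glue

variable {K : Type*} [Field K] {n : ℕ} {δ : K}

private lemma hGM : brauerGram K n δ = Mm K n + (δ - 2) • 1 := by
  ext s t
  simp only [brauerGram, Mm, Matrix.of_apply, Matrix.add_apply, Matrix.smul_apply,
    Matrix.one_apply, smul_eq_mul]
  by_cases hst : s = t
  · subst hst
    rw [if_pos rfl, if_pos rfl, Finset.inter_self, s.2]
    push_cast; ring
  · rw [if_neg hst, if_neg hst, mul_zero, add_zero]
    by_cases h1 : (s.val ∩ t.val).card = 1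
    · rw [if_pos h1, h1, Nat.cast_one]
    · rw [if_neg h1]
      have hle : (s.val ∩ t.val).card ≤ 2 := by
        calc (s.val ∩ t.val).card ≤ s.val.card := Finset.card_le_card Finset.inter_subset_left
          _ = 2 := s.2
      have hne2 : (s.val ∩ t.val).card ≠ 2 := by
        intro h2
        have e1 : s.val ∩ t.val = s.val :=
          Finset.eq_of_subset_of_card_le Finset.inter_subset_left (by rw [s.2, h2])
        have e2 : s.val ∩ t.val = t.val :=
          Finset.eq_of_subset_of_card_le Finset.inter_subset_right (by rw [t.2, h2])
        exact hst (Subtype.ext (e1.symm.trans e2))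
      have : (s.val ∩ t.val).card = 0 := by omega
      rw [this, Nat.cast_zero]

private lemma trace_Mm : (Mm K n).trace = 2 * (Fintype.card (E2 n) : K) := by
  have : ∀ s : E2 n, Mm K n s s = 2 := fun s => by
    simp only [Mm, Matrix.of_apply, Finset.inter_self, s.2]
    norm_num
  rw [Matrix.trace]
  simp only [Matrix.diag]
  rw [Finset.sum_congr rfl (fun s _ => this s), Finset.sum_const, Finset.card_univ,
    nsmul_eq_mul]
  ring

private lemma trace_Jm : (Jm K n).trace = (Fintype.card (E2 n) : K) := by
  rw [Matrix.trace]
  simp [Matrix.diag, Jm, Finset.card_univ]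

private lemma trace_G : (brauerGram K n δ).trace = (Fintype.card (E2 n) : K) * δ := by
  have : ∀ s : E2 n, brauerGram K n δ s s = δ := fun s => by simp [brauerGram]
  rw [Matrix.trace]
  simp only [Matrix.diag]
  rw [Finset.sum_congr rfl (fun s _ => this s), Finset.sum_const, Finset.card_univ,
    nsmul_eq_mul]

private lemma trace_GG (hn : 1 ≤ n) :
    (brauerGram K n δ * brauerGram K n δ).trace
      = (Fintype.card (E2 n) : K) *
        (((n:K) - 2) * 2 + 4 + 2 * (δ - 2) * 2 + (δ - 2) * (δ - 2)) := by
  have hGsq : brauerGram K n δ * brauerGram K n δ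
      = Mm K n * Mm K n + (2 * (δ - 2)) • Mm K n + ((δ - 2) * (δ - 2)) • 1 := by
    rw [hGM]
    simp only [Matrix.add_mul, Matrix.mul_add, Matrix.smul_mul, Matrix.mul_smul,
      Matrix.one_mul, Matrix.mul_one, smul_smul]
    module
  rw [hGsq, Matrix.trace_add, Matrix.trace_add, Matrix.trace_smul, Matrix.trace_smul,
    hM2 hn, Matrix.trace_add, Matrix.trace_smul, Matrix.trace_smul, trace_Mm, trace_Jm,
    Matrix.trace_one]
  simp only [smul_eq_mul, Nat.card_eq_fintype_card, Finset.card_univ]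
  ring

private lemma hcubicG (hn : 1 ≤ n) :
    (brauerGram K n δ - (δ - 2) • 1) * (brauerGram K n δ - (δ + (n:K) - 4) • 1)
      * (brauerGram K n δ - (δ + 2 * (n:K) - 4) • 1) = 0 := by
  have e1 : brauerGram K n δ - (δ - 2) • 1 = Mm K n := by rw [hGM]; module
  have e2 : brauerGram K n δ - (δ + (n:K) - 4) • 1 = Mm K n - ((n:K) - 2) • 1 := by
    rw [hGM]; module
  have e3 : brauerGram K n δ - (δ + 2 * (n:K) - 4) • 1 = Mm K n - (2 * (n:K) - 2) • 1 := by
    rw [hGM]; module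
  rw [e1, e2, e3]
  exact hfact hn

end Glue

/-- Over a field of characteristic `0`, for `n ≥ 3`, the rank of
the Brauer Gram matrix for the cell with `n − 2` through strands is: `n(n−1)/2`
(full rank) if `δ ∉ {2, 4 − n, 4 − 2n}`; `n` if `δ = 2`; `n(n−3)/2 + 1` if
`δ = 4 − n`; and `(n+1)(n−2)/2` if `δ = 4 − 2n`. -/
theorem rank_gramMatrix_brauer
    {K : Type*} [Field K] [CharZero K] (n : ℕ) (hn : 3 ≤ n) (δ : K) :
    (δ ≠ 2 → δ ≠ 4 - (n : K) → δ ≠ 4 - 2 * (n : K) →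
      (brauerGram K n δ).rank = n * (n - 1) / 2) ∧
    (δ = 2 → (brauerGram K n δ).rank = n) ∧
    (δ = 4 - (n : K) → (brauerGram K n δ).rank = n * (n - 3) / 2 + 1) ∧
    (δ = 4 - 2 * (n : K) → (brauerGram K n δ).rank = (n + 1) * (n - 2) / 2) := by
  have hn1 : 1 ≤ n := by omega
  -- cardinality facts
  have hcard : Fintype.card (E2 n) = n.choose 2 := by
    simpa using Fintype.card_finset_len (α := Fin n) 2
  have h2N : 2 * Fintype.card (E2 n) = n * (n - 1) := by
    rw [hcard, Nat.choose_two_right, Nat.mul_div_cancel']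
    have h := Nat.even_mul_succ_self (n - 1)
    rw [(by omega : n - 1 + 1 = n), Nat.mul_comm] at h
    exact h.two_dvd
  have hν : (Fintype.card (E2 n) : K) = (n : K) * ((n : K) - 1) / 2 := by
    have h := congrArg (Nat.cast : ℕ → K) h2N
    push_cast [Nat.cast_sub hn1] at h
    rw [eq_div_iff (two_ne_zero)]
    linear_combination h
  -- nonzero scalars
  have hKn : (n : K) ≠ 0 := Nat.cast_ne_zero.mpr (by omega)
  have hKn2 : (n : K) - 2 ≠ 0 := by
    have : (n : K) ≠ 2 := by exact_mod_cast (by omega : n ≠ 2)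
    exact sub_ne_zero.mpr this
  have hKn1 : 2 * (n : K) - 2 ≠ 0 := by
    have h1 : (n : K) ≠ 1 := by exact_mod_cast (by omega : n ≠ 1)
    intro h
    exact h1 (by linear_combination h / 2)
  refine ⟨?_, ?_, ?_, ?_⟩
  · -- generic case
    intro hδ1 hδ2 hδ3
    have hr : δ - 2 ≠ 0 := sub_ne_zero.mpr hδ1
    have hs : δ + (n : K) - 4 ≠ 0 := fun h => hδ2 (by linear_combination h)
    have ht : δ + 2 * (n : K) - 4 ≠ 0 := fun h => hδ3 (by linear_combination h)
    rw [rank_full_of_cubic _ _ _ _ hr hs ht (hcubicG hn1), hcard, Nat.choose_two_right]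
  · -- δ = 2
    rintro rfl
    have hexp := expand3 (brauerGram K n 2) ((2:K) - 2) (2 + (n:K) - 4) (2 + 2*(n:K) - 4)
    rw [hcubicG hn1] at hexp
    have h3 : brauerGram K n 2 * brauerGram K n 2 * brauerGram K n 2
        = (((n:K) - 2) + (2*(n:K) - 2)) • (brauerGram K n 2 * brauerGram K n 2)
          - ((((n:K) - 2)) * (2*(n:K) - 2)) • brauerGram K n 2 := by
      have h0 := hexp.symm
      linear_combination (norm := module) h0
    have hrk := rank_trace_of_cubic _ _ _ hKn2 hKn1 h3
    rw [trace_G, trace_GG hn1, hν] at hrk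
    have hfin : ((brauerGram K n 2).rank : K) = ((n : ℕ) : K) := by
      rw [hrk]
      have hK1 : (n:K) - 1 ≠ 0 := fun h => hKn1 (by linear_combination 2 * h)
      field_simp
      ring
    exact_mod_cast hfin
  · -- δ = 4 - n
    rintro rfl
    have ha : (4 - (n:K)) - 2 ≠ 0 := fun h => hKn2 (by linear_combination -h)
    have hb : (4 - (n:K)) + 2 * (n : K) - 4 ≠ 0 := fun h => hKn (by linear_combination h)
    have hexp := expand3 (brauerGram K n (4 - (n:K))) ((4 - (n:K)) - 2)
      ((4 - (n:K)) + (n:K) - 4) ((4 - (n:K)) + 2*(n:K) - 4)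
    rw [hcubicG hn1] at hexp
    have h3 : brauerGram K n (4 - (n:K)) * brauerGram K n (4 - (n:K)) * brauerGram K n (4 - (n:K))
        = (((4 - (n:K)) - 2) + ((4 - (n:K)) + 2*(n:K) - 4)) •
            (brauerGram K n (4 - (n:K)) * brauerGram K n (4 - (n:K)))
          - (((4 - (n:K)) - 2) * ((4 - (n:K)) + 2*(n:K) - 4)) • brauerGram K n (4 - (n:K)) := by
      have h0 := hexp.symm
      linear_combination (norm := module) h0
    have hrk := rank_trace_of_cubic _ _ _ ha hb h3
    rw [trace_G, trace_GG hn1, hν] at hrk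
    have hdvd : (2 : ℕ) ∣ n * (n - 3) := by
      rcases Nat.even_or_odd n with h | h
      · exact Dvd.dvd.mul_right h.two_dvd (n - 3)
      · refine Dvd.dvd.mul_left ?_ n
        rcases h with ⟨k, hk⟩
        exact ⟨k - 1, by omega⟩
    have hcast : ((n * (n - 3) / 2 + 1 : ℕ) : K) = (n:K) * ((n:K) - 3) / 2 + 1 := by
      push_cast [Nat.cast_div hdvd (by norm_num : ((2:ℕ):K) ≠ 0), Nat.cast_sub (by omega : 3 ≤ n)]
      ring
    have hfin : ((brauerGram K n (4 - (n:K))).rank : K) = ((n * (n - 3) / 2 + 1 : ℕ) : K) := by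
      rw [hrk, hcast, (by ring : (4 - (n:K)) + 2 * (n:K) - 4 = n)]
      field_simp
      ring
    exact_mod_cast hfin
  · -- δ = 4 - 2n
    rintro rfl
    have ha : (4 - 2*(n:K)) - 2 ≠ 0 := fun h => hKn1 (by linear_combination -h)
    have hb : (4 - 2*(n:K)) + (n : K) - 4 ≠ 0 := fun h => hKn (by linear_combination -h)
    have hexp := expand3 (brauerGram K n (4 - 2*(n:K))) ((4 - 2*(n:K)) - 2)
      ((4 - 2*(n:K)) + (n:K) - 4) ((4 - 2*(n:K)) + 2*(n:K) - 4)
    rw [hcubicG hn1] at hexp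
    have h3 : brauerGram K n (4 - 2*(n:K)) * brauerGram K n (4 - 2*(n:K))
          * brauerGram K n (4 - 2*(n:K))
        = (((4 - 2*(n:K)) - 2) + ((4 - 2*(n:K)) + (n:K) - 4)) •
            (brauerGram K n (4 - 2*(n:K)) * brauerGram K n (4 - 2*(n:K)))
          - (((4 - 2*(n:K)) - 2) * ((4 - 2*(n:K)) + (n:K) - 4)) •
            brauerGram K n (4 - 2*(n:K)) := by
      have h0 := hexp.symm
      linear_combination (norm := module) h0
    have hrk := rank_trace_of_cubic _ _ _ ha hb h3
    rw [trace_G, trace_GG hn1, hν] at hrk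
    have hdvd : (2 : ℕ) ∣ (n + 1) * (n - 2) := by
      rcases Nat.even_or_odd n with h | h
      · refine Dvd.dvd.mul_left ?_ (n + 1)
        rcases h with ⟨k, hk⟩
        exact ⟨k - 1, by omega⟩
      · refine Dvd.dvd.mul_right ?_ (n - 2)
        rcases h with ⟨k, hk⟩
        exact ⟨k + 1, by omega⟩
    have hcast : (((n + 1) * (n - 2) / 2 : ℕ) : K) = ((n:K) + 1) * ((n:K) - 2) / 2 := by
      push_cast [Nat.cast_div hdvd (by norm_num : ((2:ℕ):K) ≠ 0), Nat.cast_sub (by omega : 2 ≤ n)]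
      ring
    have hfin : ((brauerGram K n (4 - 2*(n:K))).rank : K)
        = (((n + 1) * (n - 2) / 2 : ℕ) : K) := by
      rw [hrk, hcast]
      field_simp
      ring
    exact_mod_cast hfin
end

section
/- Let R be a commutative ring, n ≥ 1 a natural number, δ ∈ R, and set m = (n−1)(n−2)/2. Let u : ℕ → R[X] be any sequence of polynomials with u 0 = 1, u 1 = X and u(k+2) = X·u(k+1) − u(k) for all k. Let M be the square matrix of size (n−1) + (n−1) + m, indexed by Fin(n−1) ⊕ Fin(n−1) ⊕ Fin m, with blocks: the (1,1)-block is the (n−1)×(n−1) tridiagonal matrix with δ on the diagonal and 1 on the sub- and superdiagonals (entry δ if i = j, entry 1 if |i − j| = 1, entry 0 otherwise); the (1,2)- and (2,1)-blocks are δ times the identity of size n−1; the (2,2)-block is δ² times the identity of size n−1; the (3,3)-block is δ² times the identity of size m; and all remaining blocks are zero. Then det M = δ^{n(n−1)} · (u(n−1)).eval(δ − 1). -/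
/-- The tridiagonal matrix with `a` on the diagonal and `1` on the off-diagonals. -/
def triM (R : Type*) [CommRing R] (k : ℕ) (a : R) : Matrix (Fin k) (Fin k) R :=
  Matrix.of fun i j =>
    if (i : ℕ) = (j : ℕ) then a
    else if (i : ℕ) + 1 = (j : ℕ) ∨ (j : ℕ) + 1 = (i : ℕ) then (1 : R) else 0

lemma triM_det_rec {R : Type*} [CommRing R] (k : ℕ) (a : R) :
    (triM R (k + 2) a).det = a * (triM R (k + 1) a).det - (triM R k a).det := by
  rw [Matrix.det_succ_column_zero, Fin.sum_univ_succ, Fin.sum_univ_succ]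
  have hz : ∀ i : Fin k, triM R (k+2) a i.succ.succ 0 = 0 := by
    intro i
    simp only [triM, Matrix.of_apply, Fin.val_succ, Fin.val_zero]
    split_ifs <;> first | rfl | omega | simp_all
  have hsum : (∑ i : Fin k, (-1 : R) ^ (((i.succ.succ : Fin (k+2))) : ℕ) *
      triM R (k+2) a i.succ.succ 0 *
      ((triM R (k+2) a).submatrix i.succ.succ.succAbove Fin.succ).det) = 0 := by
    apply Finset.sum_eq_zero
    intro i _
    rw [hz i, mul_zero, zero_mul]
  rw [hsum]
  have h00 : triM R (k+2) a 0 0 = a := by simp [triM]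
  have h10 : triM R (k+2) a (0 : Fin (k+1)).succ 0 = 1 := by
    simp only [triM, Matrix.of_apply, Fin.val_succ, Fin.val_zero]
    split_ifs <;> first | rfl | omega | simp_all
  have hsub0 : (triM R (k+2) a).submatrix (0 : Fin (k+2)).succAbove Fin.succ = triM R (k+1) a := by
    ext i j
    simp only [Matrix.submatrix_apply, Fin.succAbove_zero, triM, Matrix.of_apply, Fin.val_succ]
    split_ifs <;> first | rfl | omega
  set N : Matrix (Fin (k+1)) (Fin (k+1)) R :=
    (triM R (k+2) a).submatrix ((0 : Fin (k+1)).succ).succAbove Fin.succ with hN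
  have hNdet : N.det = (triM R k a).det := by
    cases k with
    | zero => simp [Matrix.det_fin_one, Matrix.det_fin_zero, hN, triM]
    | succ k =>
      rw [Matrix.det_succ_row_zero, Fin.sum_univ_succ]
      have hrow0 : ∀ j : Fin (k+1), N 0 j.succ = 0 := by
        intro j
        simp only [hN, Matrix.submatrix_apply, triM, Matrix.of_apply, Fin.val_succ,
          Fin.succAbove, Fin.castSucc, Fin.castAdd, Fin.castLE, Fin.lt_def]
        split_ifs <;> first | rfl | omega | simp_all
      have hsum2 : (∑ j : Fin (k+1), (-1 : R) ^ ((j.succ : Fin (k+2)) : ℕ) * N 0 j.succ *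
          (N.submatrix Fin.succ j.succ.succAbove).det) = 0 := by
        apply Finset.sum_eq_zero
        intro j _
        rw [hrow0 j, mul_zero, zero_mul]
      rw [hsum2]
      have h01 : N 0 0 = 1 := by
        simp only [hN, Matrix.submatrix_apply, triM, Matrix.of_apply, Fin.val_succ,
          Fin.succAbove, Fin.castSucc, Fin.castAdd, Fin.castLE, Fin.lt_def]
        split_ifs <;> first | rfl | omega | simp_all
      have hmin : N.submatrix Fin.succ (0 : Fin (k+2)).succAbove = triM R (k+1) a := by
        ext p q
        simp only [hN, Matrix.submatrix_apply, Fin.succAbove_zero, triM, Matrix.of_apply,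
          Fin.val_succ, Fin.succAbove, Fin.castSucc, Fin.castAdd, Fin.castLE, Fin.lt_def]
        split_ifs <;> first | rfl | omega | simp_all
      rw [h01, hmin]
      simp
  rw [h00, h10, hsub0, hNdet]
  simp
  ring

lemma triM_det_eq {R : Type*} [CommRing R] (a : R)
    (u : ℕ → Polynomial R) (hu0 : u 0 = 1) (hu1 : u 1 = Polynomial.X)
    (hurec : ∀ k, u (k + 2) = Polynomial.X * u (k + 1) - u k) :
    ∀ k, (triM R k a).det = (u k).eval a := by
  intro k
  induction k using Nat.twoStepInduction with
  | zero => simp [Matrix.det_fin_zero, hu0]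
  | one => simp [Matrix.det_fin_one, hu1, triM]
  | more k ih1 ih2 =>
    rw [triM_det_rec, ih1, ih2, hurec]
    simp [mul_comm]

lemma triM_sub_one {R : Type*} [CommRing R] (N : ℕ) (δ : R) :
    triM R N δ - 1 = triM R N (δ - 1) := by
  ext i j
  simp only [Matrix.sub_apply, Matrix.one_apply, triM, Matrix.of_apply]
  split_ifs <;> simp_all [Fin.ext_iff]

lemma detM2 {R : Type*} [CommRing R] (N : ℕ) (δ : R) :
    (Matrix.fromBlocks (triM R N δ) (δ • (1 : Matrix (Fin N) (Fin N) R))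
      (δ • 1) ((δ ^ 2) • 1)).det = δ ^ N * δ ^ N * (triM R N δ - 1).det := by
  set I : Matrix (Fin N) (Fin N) R := 1 with hI
  set Z : Matrix (Fin N) (Fin N) R := 0 with hZ
  have hfac : Matrix.fromBlocks (triM R N δ) (δ • (1 : Matrix (Fin N) (Fin N) R))
      (δ • 1) ((δ ^ 2) • 1)
      = Matrix.fromBlocks I Z Z (δ • I) *
        (Matrix.fromBlocks I I Z I *
          Matrix.fromBlocks (triM R N δ - I) Z I (δ • I)) := by
    rw [Matrix.fromBlocks_multiply, Matrix.fromBlocks_multiply]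
    simp [hI, hZ, Matrix.smul_mul, Matrix.mul_smul, smul_smul, sq, sub_add_cancel]
  rw [hfac, Matrix.det_mul, Matrix.det_mul, Matrix.det_fromBlocks_zero₂₁,
    Matrix.det_fromBlocks_zero₂₁, Matrix.det_fromBlocks_zero₁₂]
  simp [hI, hZ, Matrix.det_smul]
  ring

lemma motzkin_pow_aux (n : ℕ) (hn : 1 ≤ n) :
    n * (n - 1) = 2 * ((n - 1) * (n - 2) / 2) + 2 * (n - 1) := by
  obtain ⟨a, rfl⟩ : ∃ a, n = a + 1 := ⟨n - 1, by omega⟩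
  cases a with
  | zero => simp
  | succ b =>
    have h2 : 2 ∣ (b + 1) * b := by
      have := Nat.even_mul_succ_self b
      rw [mul_comm] at this
      exact this.two_dvd
    have hb : b + 1 + 1 - 2 = b := by omega
    simp only [Nat.add_sub_cancel, Nat.succ_sub_one, hb]
    rw [Nat.mul_div_cancel' h2]
    ring

/-- The Gram matrix of the Motzkin algebra `Mo_n(δ)` for the cell with `n − 2`
through strands, indexed by `Fin (n−1) ⊕ Fin (n−1) ⊕ Fin m` with
`m = (n−1)(n−2)/2`: the `(1,1)`-block is the tridiagonal matrix with `δ` on the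
diagonal and `1` on the off-diagonals, the `(1,2)`- and `(2,1)`-blocks are `δ`
times the identity, the `(2,2)`- and `(3,3)`-blocks are `δ²` times the identity,
and all other blocks vanish. -/
def motzkinGram (R : Type*) [CommRing R] (n : ℕ) (δ : R) :
    Matrix (Fin (n - 1) ⊕ Fin (n - 1) ⊕ Fin ((n - 1) * (n - 2) / 2))
      (Fin (n - 1) ⊕ Fin (n - 1) ⊕ Fin ((n - 1) * (n - 2) / 2)) R :=
  Matrix.of fun p q =>
    match p, q with
    | Sum.inl i, Sum.inl j =>
        if i = j then δ
        else if (i : ℕ) + 1 = (j : ℕ) ∨ (j : ℕ) + 1 = (i : ℕ) then (1 : R) else 0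
    | Sum.inl i, Sum.inr (Sum.inl j) => if i = j then δ else 0
    | Sum.inr (Sum.inl i), Sum.inl j => if i = j then δ else 0
    | Sum.inr (Sum.inl i), Sum.inr (Sum.inl j) => if i = j then δ ^ 2 else 0
    | Sum.inr (Sum.inr i), Sum.inr (Sum.inr j) => if i = j then δ ^ 2 else 0
    | _, _ => 0

/-- Let `R` be a commutative ring, `n ≥ 1`, `δ ∈ R`, and let
`u : ℕ → R[X]` satisfy the (normalized) Chebyshev recursion `u 0 = 1`, `u 1 = X`,
`u (k+2) = X·u (k+1) − u k`. Then the determinant of the Motzkin Gram matrix for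
the cell with `n − 2` through strands equals `δ^(n(n−1)) · u_{n−1}(δ − 1)`. -/
theorem det_gramMatrix_motzkin
    {R : Type*} [CommRing R] (n : ℕ) (hn : 1 ≤ n) (δ : R)
    (u : ℕ → Polynomial R) (hu0 : u 0 = 1) (hu1 : u 1 = Polynomial.X)
    (hurec : ∀ k, u (k + 2) = Polynomial.X * u (k + 1) - u k) :
    (motzkinGram R n δ).det = δ ^ (n * (n - 1)) * (u (n - 1)).eval (δ - 1) := by
  have hblocks : motzkinGram R n δ =
      Matrix.reindex (Equiv.sumAssoc (Fin (n-1)) (Fin (n-1)) (Fin ((n-1)*(n-2)/2)))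
        (Equiv.sumAssoc (Fin (n-1)) (Fin (n-1)) (Fin ((n-1)*(n-2)/2)))
        (Matrix.fromBlocks
          (Matrix.fromBlocks (triM R (n-1) δ) (δ • (1 : Matrix (Fin (n-1)) (Fin (n-1)) R))
            (δ • 1) ((δ ^ 2) • 1))
          0 0 ((δ ^ 2) • (1 : Matrix (Fin ((n-1)*(n-2)/2)) (Fin ((n-1)*(n-2)/2)) R))) := by
    ext p q
    rcases p with i | i | i <;> rcases q with j | j | j <;>
      simp [motzkinGram, triM, Matrix.reindex_apply, Equiv.sumAssoc, Matrix.one_apply,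
        Fin.val_inj, mul_ite, mul_one, mul_zero, Matrix.smul_apply, smul_eq_mul]
  rw [hblocks, Matrix.det_reindex_self, Matrix.det_fromBlocks_zero₂₁, detM2,
    triM_sub_one, triM_det_eq (δ - 1) u hu0 hu1 hurec]
  rw [Matrix.det_smul, Matrix.det_one, Fintype.card_fin, mul_one]
  rw [motzkin_pow_aux n hn, pow_add, pow_mul]
  ring
end

section
/- Let p : ℕ → ℂ[X] be the sequence of polynomials defined by p 0 = 1, p 1 = X and p(k+2) = ((X − 2)/2)·p(k+1) − p(k) for all k (here (X − 2)/2 means the polynomial (1/2)·X − 1). Then for every k, the polynomial p k has degree exactly k and has exactly k distinct complex roots; equivalently, p k is squarefree of degree k (its roots are the k distinct real numbers 2 + 4·cos(jπ/(k+1)) for j = 1, …, k). -/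
open Polynomial

private lemma pair_induction (Q : ℕ → Prop) (h0 : Q 0) (h1 : Q 1)
    (hstep : ∀ k, Q k → Q (k + 1) → Q (k + 2)) : ∀ k, Q k := by
  have H : ∀ k, Q k ∧ Q (k + 1) := by
    intro k
    induction k with
    | zero => exact ⟨h0, h1⟩
    | succ n ih => exact ⟨ih.2, hstep n ih.1 ih.2⟩
  exact fun k => (H k).1

private lemma key_identity (p : ℕ → Polynomial ℂ)
    (h0 : p 0 = 1) (h1 : p 1 = Polynomial.X)
    (hrec : ∀ k, p (k + 2) =
      (Polynomial.C (1 / 2 : ℂ) * Polynomial.X - 1) * p (k + 1) - p k) :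
    ∀ k, ∀ z w : ℂ, z * w = 1 →
      (z ^ 2 - 1) * z ^ k * (p k).eval (2 * z + 2 * w + 2)
        = (2 * z ^ 2 + 2 * z + 1) * z ^ (2 * k) - (z ^ 2 + 2 * z + 2) := by
  refine pair_induction _ ?_ ?_ ?_
  · intro z w hzw
    rw [h0]
    simp only [eval_one]
    ring
  · intro z w hzw
    rw [h1]
    simp only [eval_X]
    linear_combination (2 * (z ^ 2 - 1)) * hzw
  · intro k ih1 ih2 z w hzw
    have H1 := ih1 z w hzw
    have H2 := ih2 z w hzw
    rw [hrec k]
    simp only [eval_sub, eval_mul, eval_add, eval_one, eval_C, eval_X, eval_ofNat]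
    linear_combination (z + w) * z * H2 - z ^ 2 * H1 +
      ((2 * z ^ 2 + 2 * z + 1) * z ^ (2 * k + 2) - (z ^ 2 + 2 * z + 2)) * hzw

private lemma normSq_eq_one_of (z : ℂ) (k : ℕ) (hk : 1 ≤ k)
    (h : (2 * z ^ 2 + 2 * z + 1) * z ^ (2 * k) = z ^ 2 + 2 * z + 2) :
    Complex.normSq z = 1 := by
  have hQR : Complex.normSq (2 * z ^ 2 + 2 * z + 1) * (Complex.normSq z) ^ (2 * k)
      = Complex.normSq (z ^ 2 + 2 * z + 2) := by
    rw [← map_pow, ← map_mul, h]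
  set σ := Complex.normSq z with hσdef
  have hkey : Complex.normSq (2 * z ^ 2 + 2 * z + 1) - Complex.normSq (z ^ 2 + 2 * z + 2)
      = (σ - 1) * (3 * σ + 4 * z.re + 3) := by
    simp only [hσdef, Complex.normSq_apply, pow_two, Complex.add_re, Complex.add_im,
      Complex.mul_re, Complex.mul_im, Complex.one_re, Complex.one_im,
      Complex.re_ofNat, Complex.im_ofNat]
    ring
  have hσ0 : 0 ≤ σ := Complex.normSq_nonneg z
  have hre : z.re * z.re + z.im * z.im = σ := by
    rw [hσdef, Complex.normSq_apply]
  have hM : 0 < 3 * σ + 4 * z.re + 3 := by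
    nlinarith [sq_nonneg (3 * z.re + 2), sq_nonneg z.im]
  have hQ0 : 0 ≤ Complex.normSq (2 * z ^ 2 + 2 * z + 1) := Complex.normSq_nonneg _
  rcases lt_trichotomy σ 1 with hlt | heq | hgt
  · exfalso
    have hpow : σ ^ (2 * k) < 1 := pow_lt_one₀ hσ0 hlt (by omega)
    nlinarith [mul_nonneg hQ0 (sub_nonneg.2 hpow.le)]
  · exact heq
  · exfalso
    have hpow : 1 < σ ^ (2 * k) := one_lt_pow₀ hgt (by omega)
    nlinarith [mul_nonneg hQ0 (sub_nonneg.2 hpow.le)]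

private lemma root_is_real (p : ℕ → Polynomial ℂ)
    (h0 : p 0 = 1) (h1 : p 1 = Polynomial.X)
    (hrec : ∀ k, p (k + 2) =
      (Polynomial.C (1 / 2 : ℂ) * Polynomial.X - 1) * p (k + 1) - p k)
    (k : ℕ) (hk : 1 ≤ k) (a : ℂ) (ha : (p k).eval a = 0) : a.im = 0 := by
  obtain ⟨s, hs⟩ := IsAlgClosed.exists_pow_nat_eq ((a - 2) ^ 2 - 16) (n := 2) zero_lt_two
  set z : ℂ := ((a - 2) + s) / 4 with hzdef
  have hquad : 2 * z ^ 2 + (2 - a) * z + 2 = 0 := by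
    rw [hzdef]
    linear_combination hs / 8
  have hz0 : z ≠ 0 := by
    intro h
    rw [h] at hquad
    simp at hquad
  have hzw : z * z⁻¹ = 1 := mul_inv_cancel₀ hz0
  have haz : a = 2 * z + 2 * z⁻¹ + 2 := by
    field_simp
    linear_combination -hquad
  have hid := key_identity p h0 h1 hrec k z z⁻¹ hzw
  rw [← haz, ha, mul_zero] at hid
  have heq : (2 * z ^ 2 + 2 * z + 1) * z ^ (2 * k) = z ^ 2 + 2 * z + 2 := by
    linear_combination -hid
  have hσ : Complex.normSq z = 1 := normSq_eq_one_of z k hk heq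
  have hconj : (starRingEnd ℂ) z = z⁻¹ := by
    have h2 : z * (starRingEnd ℂ) z = 1 := by
      rw [Complex.mul_conj, hσ, Complex.ofReal_one]
    field_simp at h2 ⊢
    linear_combination h2
  have : (starRingEnd ℂ) a = a := by
    rw [haz]
    simp only [map_add, map_mul, map_inv₀, hconj, map_ofNat, inv_inv]
    ring
  exact Complex.conj_eq_iff_im.mp this

noncomputable def Preal : ℕ → Polynomial ℝ
  | 0 => 1
  | 1 => Polynomial.X
  | (k+2) => (Polynomial.C (1/2 : ℝ) * Polynomial.X - 1) * Preal (k+1) - Preal k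

private lemma p_eq_map (p : ℕ → Polynomial ℂ)
    (h0 : p 0 = 1) (h1 : p 1 = Polynomial.X)
    (hrec : ∀ k, p (k + 2) =
      (Polynomial.C (1 / 2 : ℂ) * Polynomial.X - 1) * p (k + 1) - p k) :
    ∀ k, p k = (Preal k).map (algebraMap ℝ ℂ) := by
  refine pair_induction _ ?_ ?_ ?_
  · rw [h0, Preal, Polynomial.map_one]
  · rw [h1, Preal, Polynomial.map_X]
  · intro k ihk ihk1
    rw [hrec k, Preal, Polynomial.map_sub, Polynomial.map_mul, Polynomial.map_sub,
      Polynomial.map_mul, Polynomial.map_C, Polynomial.map_X, Polynomial.map_one,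
      ← ihk, ← ihk1]
    norm_num

private lemma eval_real (p : ℕ → Polynomial ℂ)
    (h0 : p 0 = 1) (h1 : p 1 = Polynomial.X)
    (hrec : ∀ k, p (k + 2) =
      (Polynomial.C (1 / 2 : ℂ) * Polynomial.X - 1) * p (k + 1) - p k)
    (k : ℕ) (b : ℝ) : (p k).eval (b : ℂ) = (((Preal k).eval b : ℝ) : ℂ) := by
  rw [p_eq_map p h0 h1 hrec k]
  rw [Polynomial.eval_map]
  simpa using Polynomial.eval₂_at_apply (p := Preal k) (algebraMap ℝ ℂ) b

private lemma wronskian_id (p : ℕ → Polynomial ℂ)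
    (h0 : p 0 = 1) (h1 : p 1 = Polynomial.X)
    (hrec : ∀ k, p (k + 2) =
      (Polynomial.C (1 / 2 : ℂ) * Polynomial.X - 1) * p (k + 1) - p k) :
    ∀ m, derivative (p (m+1)) * p m - p (m+1) * derivative (p m)
      = Polynomial.C (1/2 : ℂ) * (∑ j ∈ Finset.range m, (p (j+1))^2) + 1 := by
  intro m
  induction m with
  | zero =>
      rw [h0, h1]
      simp
  | succ n ih =>
      have hd : derivative (p (n+2)) = Polynomial.C (1/2 : ℂ) * p (n+1)
          + (Polynomial.C (1/2 : ℂ) * Polynomial.X - 1) * derivative (p (n+1))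
          - derivative (p n) := by
        rw [hrec n]
        simp only [derivative_sub, derivative_mul, derivative_C, derivative_X,
          derivative_one, zero_mul, mul_one, zero_add, zero_sub, sub_zero]
        try ring
      rw [hd, hrec n, Finset.sum_range_succ]
      linear_combination ih

private lemma degree_p (p : ℕ → Polynomial ℂ)
    (h0 : p 0 = 1) (h1 : p 1 = Polynomial.X)
    (hrec : ∀ k, p (k + 2) =
      (Polynomial.C (1 / 2 : ℂ) * Polynomial.X - 1) * p (k + 1) - p k) :
    ∀ k, (p k).degree = (k : WithBot ℕ) := by
  have hg : (Polynomial.C (1/2 : ℂ) * Polynomial.X - 1).degree = 1 := by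
    rw [Polynomial.degree_sub_eq_left_of_degree_lt]
    · exact Polynomial.degree_C_mul_X (by norm_num)
    · rw [Polynomial.degree_C_mul_X (by norm_num), Polynomial.degree_one]
      norm_num
  refine pair_induction _ ?_ ?_ ?_
  · rw [h0, Polynomial.degree_one]; rfl
  · rw [h1, Polynomial.degree_X]; rfl
  · intro k ih1 ih2
    have hmul : ((Polynomial.C (1/2 : ℂ) * Polynomial.X - 1) * p (k+1)).degree
        = ((k + 2 : ℕ) : WithBot ℕ) := by
      rw [Polynomial.degree_mul, hg, ih2]
      exact_mod_cast (show (1 + (k+1) : ℕ) = k + 2 by omega)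
    rw [hrec k, Polynomial.degree_sub_eq_left_of_degree_lt, hmul]
    rw [hmul, ih1]
    exact_mod_cast (by omega : k < k + 2)

private lemma no_common_root (p : ℕ → Polynomial ℂ)
    (hp0 : p 0 = 1) (hp1 : p 1 = Polynomial.X)
    (hrec : ∀ k, p (k + 2) =
      (Polynomial.C (1 / 2 : ℂ) * Polynomial.X - 1) * p (k + 1) - p k)
    (m : ℕ) (a : ℂ) (h1 : (p (m+1)).eval a = 0)
    (h2 : ((p (m+1)).derivative).eval a = 0) : False := by
  have him : a.im = 0 := root_is_real p hp0 hp1 hrec (m+1) (by omega) a h1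
  obtain ⟨b, rfl⟩ : ∃ r : ℝ, a = (r : ℂ) :=
    ⟨a.re, (Complex.ext (by simp) (by simp [him])).symm⟩
  have hw := congrArg (Polynomial.eval ((b : ℂ))) (wronskian_id p hp0 hp1 hrec m)
  simp only [eval_sub, eval_mul, eval_add, eval_C, eval_one, eval_finset_sum, eval_pow,
    h1, h2, zero_mul, mul_zero, sub_zero, zero_sub, neg_zero, sub_self] at hw
  have hj : ∀ j ∈ Finset.range m,
      (p (j+1)).eval ((b : ℂ)) ^ 2 = (((Preal (j+1)).eval b ^ 2 : ℝ) : ℂ) := by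
    intro j _
    rw [eval_real p hp0 hp1 hrec (j+1) b]
    push_cast
    ring
  rw [Finset.sum_congr rfl hj, ← Complex.ofReal_sum] at hw
  set S := ∑ j ∈ Finset.range m, ((Preal (j+1)).eval b) ^ 2 with hSdef
  have hS : 0 ≤ S := Finset.sum_nonneg fun j _ => sq_nonneg _
  have hw' : ((1/2 * S + 1 : ℝ) : ℂ) = 0 := by
    push_cast
    linear_combination -hw
  have := Complex.ofReal_eq_zero.mp hw'
  linarith


/-- Let `p : ℕ → ℂ[X]` be defined by `p 0 = 1`, `p 1 = X` and
`p (k+2) = ((X − 2)/2)·p (k+1) − p k`, where `(X − 2)/2` is the polynomial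
`(1/2)·X − 1`. Then for every `k`, the polynomial `p k` has degree exactly `k` and
exactly `k` distinct complex roots; equivalently, `p k` is squarefree of degree
`k`. (Its roots are the `k` distinct real numbers `2 + 4·cos(jπ/(k+1))`,
`j = 1, …, k`.) -/
theorem dihedral_middle_cell_polynomial_squarefree_of_degree
    (p : ℕ → Polynomial ℂ)
    (h0 : p 0 = 1) (h1 : p 1 = Polynomial.X)
    (hrec : ∀ k, p (k + 2) =
      (Polynomial.C (1 / 2 : ℂ) * Polynomial.X - 1) * p (k + 1) - p k) :
    ∀ k, (p k).natDegree = k ∧ (p k).roots.toFinset.card = k ∧ Squarefree (p k) := by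
  intro k
  have hdeg : ∀ n, (p n).degree = (n : WithBot ℕ) := degree_p p h0 h1 hrec
  have hnat : ∀ n, (p n).natDegree = n := fun n =>
    Polynomial.natDegree_eq_of_degree_eq_some (hdeg n)
  have hne : ∀ n, p n ≠ 0 := by
    intro n hn
    have := hdeg n
    rw [hn, Polynomial.degree_zero] at this
    exact (WithBot.bot_ne_coe this)
  match k with
  | 0 =>
      refine ⟨hnat 0, ?_, ?_⟩
      · rw [h0]; simp
      · rw [h0]; exact squarefree_one
  | (m+1) =>
      have hsep : (p (m+1)).Separable := by
        rw [Polynomial.separable_def]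
        by_contra hcop
        classical
        set g := EuclideanDomain.gcd (p (m+1)) ((p (m+1)).derivative) with hgdef
        have hu : ¬ IsUnit g := fun h => hcop ((EuclideanDomain.gcd_isUnit_iff (x := p (m+1)) (y := (p (m+1)).derivative)).mp h)
        have hgl : g ∣ p (m+1) := EuclideanDomain.gcd_dvd_left _ _
        have hgr : g ∣ (p (m+1)).derivative := EuclideanDomain.gcd_dvd_right _ _
        have hdg : g.degree ≠ 0 := fun h => hu (Polynomial.isUnit_iff_degree_eq_zero.mpr h)
        obtain ⟨a, haroot⟩ := IsAlgClosed.exists_root g hdg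
        exact no_common_root p h0 h1 hrec m a
          (Polynomial.eval_eq_zero_of_dvd_of_eval_eq_zero hgl haroot)
          (Polynomial.eval_eq_zero_of_dvd_of_eval_eq_zero hgr haroot)
      refine ⟨hnat (m+1), ?_, hsep.squarefree⟩
      rw [Multiset.toFinset_card_of_nodup (Polynomial.nodup_roots hsep)]
      rw [(Polynomial.splits_iff_card_roots (f := p (m+1))).mp
        (IsAlgClosed.splits (p (m+1)))]
      exact hnat (m+1)
end
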